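/- arXiv:1010.2761 — 6 statements merged into one kernel-verified Lean document; each statement's English description precedes it below -/
import Mathlib

section
/- Every finite-dimensional F-linear representation of the dihedral group G = D_{2p} decomposes as a direct sum of subrepresentations, each of which is isomorphic either to the 1-dimensional trivial representation or to W_i for some 0 ≤ i ≤ (p-1)/2. -/
/-!
Since `p` is odd and `F` has characteristic two, `ρ` is annihilated by the separable polynomial
`X ^ p - 1`, so `V` is the direct sum of the eigenspaces `V_μ` of `ρ`, with `μ = λ ^ j`, and `σ`
maps `V_μ` onto `V_{μ⁻¹}`. For `0 < j ≤ (p - 1) / 2`, a basis `d_k` of `V_{λ⁻ʲ}` gives copies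
`span {d_k, σ d_k}` of `W_j` that fill `V_{λ⁻ʲ} ⊕ V_{λʲ}`. On `V_1`, `N = σ - 1` satisfies
`N² = 0` because the characteristic is two: with `C` a complement of `ker N` and `T` a complement
of `N C` in `ker N`, one gets `V_1 = T ⊕ C ⊕ σ C`, where `T` splits into trivial lines and a basis
`c_k` of `C` gives copies `span {c_k, σ c_k}` of `W_0`.
-/

open Submodule Module Module.End Polynomial Function DihedralGroup

section Lattice

variable {α : Type*} [CompleteLattice α] [IsModularLattice α]

theorem iSupIndep.sigma {ι : Type*} {β : ι → Type*} {f : (Σ i, β i) → α}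
    (h : iSupIndep fun i => ⨆ j, f ⟨i, j⟩) (hf : ∀ i, iSupIndep fun j => f ⟨i, j⟩) :
    iSupIndep f := by
  rintro ⟨i, j⟩
  have hle : ⨆ (x) (_ : x ≠ ⟨i, j⟩), f x ≤
      (⨆ (j') (_ : j' ≠ j), f ⟨i, j'⟩) ⊔ ⨆ (i') (_ : i' ≠ i), ⨆ j', f ⟨i', j'⟩ := by
    refine iSup₂_le fun ⟨i', j'⟩ hne => ?_
    by_cases hi : i' = i
    · subst hi
      exact le_sup_of_le_left (le_iSup₂_of_le j' (fun h => hne (h ▸ rfl)) le_rfl)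
    · exact le_sup_of_le_right (le_iSup₂_of_le i' hi (le_iSup (fun j' => f ⟨i', j'⟩) j'))
  refine ((hf i j).disjoint_sup_right_of_disjoint_sup_left ((h i).mono_left ?_)).mono_right hle
  exact sup_le (le_iSup (fun j => f ⟨i, j⟩) j) (iSup₂_le fun j' _ => le_iSup (fun j => f ⟨i, j⟩) j')

theorem iSupIndep.biSup_of_pairwise_disjoint [IsCompactlyGenerated α] {ι κ : Type*}
    {f : ι → α} (hf : iSupIndep f) {s : κ → Set ι} (hs : Pairwise (Disjoint on s)) :
    iSupIndep fun k => ⨆ i ∈ s k, f i := by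
  intro k
  refine (hf.disjoint_biSup_biSup (disjoint_compl_right (a := s k))).mono_right ?_
  exact iSup₂_le fun k' hk' => biSup_mono fun i hi => Set.disjoint_left.mp (hs hk') hi

end Lattice

theorem LinearIndependent.iSupIndep_span_pair {R M κ : Type*} [Ring R] [AddCommGroup M]
    [Module R M] {u w : κ → M} (h : LinearIndependent R (Sum.elim u w)) :
    iSupIndep fun k => span R {u k, w k} := by
  have hs : Pairwise (Disjoint on fun k : κ => ({.inl k, .inr k} : Set (κ ⊕ κ))) := by
    intro k k' hkk'
    simp [Function.onFun, Set.disjoint_left, hkk']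
  convert h.iSupIndep_span_singleton.biSup_of_pairwise_disjoint hs using 2 with k
  rw [iSup_pair, span_insert, Sum.elim_inl, Sum.elim_inr]

theorem LinearIndependent.pair_of_sum_elim {R M κ : Type*} [Ring R] [AddCommGroup M] [Module R M]
    {u w : κ → M} (h : LinearIndependent R (Sum.elim u w)) (k : κ) :
    LinearIndependent R ![u k, w k] := by
  have hinj : Injective ![(Sum.inl k : κ ⊕ κ), Sum.inr k] := by
    intro a b hab
    fin_cases a <;> fin_cases b <;> simp_all
  convert h.comp _ hinj using 1
  ext j
  fin_cases j <;> rfl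

theorem Module.Basis.span_range_coe {R M ι : Type*} [Ring R] [AddCommGroup M] [Module R M]
    {S : Submodule R M} (b : Basis ι R S) : span R (Set.range fun i => (b i : M)) = S := by
  rw [show (Set.range fun i => (b i : M)) = S.subtype '' Set.range b from (Set.range_comp _ _),
    span_image, b.span_eq, Submodule.map_top, range_subtype]

theorem Submodule.exists_fixed_sup_free_of_involution {F V : Type*} [Field F] [CharP F 2]
    [AddCommGroup V] [Module F V] {σ : V →ₗ[F] V} (hσ : Involutive σ)
    {S : Submodule F V} (hS : ∀ v ∈ S, σ v ∈ S) :
    ∃ T C : Submodule F V, (∀ v ∈ T, σ v = v) ∧ Disjoint C (C.map σ) ∧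
      Disjoint T (C ⊔ C.map σ) ∧ T ⊔ (C ⊔ C.map σ) = S := by
  set N := σ - 1
  have hN : ∀ v, N v = σ v - v := fun v => rfl
  have hNN : ∀ v, N (N v) = 0 := fun v => by
    rw [hN, hN, map_sub, hσ v, show v - σ v - (σ v - v) = (2 : F) • (v - σ v) by
      rw [two_smul]; abel, CharTwo.two_eq_zero, zero_smul]
  set K := S ⊓ LinearMap.ker N
  obtain ⟨C, hKC, hKCS⟩ := IsModularLattice.exists_disjoint_and_sup_eq (inf_le_left : K ≤ S)
  have hCS : C ≤ S := hKCS ▸ le_sup_right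
  have hNC : C.map N ≤ K := map_le_iff_le_comap.mpr fun c hc =>
    ⟨(hN c).symm ▸ sub_mem (hS c (hCS hc)) (hCS hc), hNN c⟩
  obtain ⟨T, hNCT, hNCTK⟩ := IsModularLattice.exists_disjoint_and_sup_eq hNC
  have hTK : T ≤ K := hNCTK ▸ le_sup_right
  have hsup : C ⊔ C.map σ = C ⊔ C.map N := by
    refine le_antisymm (sup_le le_sup_left (map_le_iff_le_comap.mpr fun c hc => ?_))
      (sup_le le_sup_left (map_le_iff_le_comap.mpr fun c hc => ?_))
    · rw [mem_comap, show σ c = c + N c by rw [hN]; abel]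
      exact add_mem (mem_sup_left hc) (mem_sup_right (mem_map_of_mem hc))
    · rw [mem_comap, hN]
      exact sub_mem (mem_sup_right (mem_map_of_mem hc)) (mem_sup_left hc)
  refine ⟨T, C, fun v hv => sub_eq_zero.mp ((hN v).symm.trans (hTK hv).2), ?_, ?_, ?_⟩
  · rw [disjoint_def]
    rintro _ hσc ⟨c, hc, rfl⟩
    have hNc : N c ∈ K ⊓ C := ⟨hNC (mem_map_of_mem hc), (hN c).symm ▸ sub_mem hσc hc⟩
    rw [hKC.eq_bot, mem_bot] at hNc
    have hc0 : c ∈ K ⊓ C := ⟨⟨hCS hc, hNc⟩, hc⟩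
    rw [hKC.eq_bot, mem_bot] at hc0
    rw [hc0, map_zero]
  · rw [hsup, sup_comm C]
    exact hNCT.symm.disjoint_sup_right_of_disjoint_sup_left (by rwa [sup_comm, hNCTK])
  · rw [hsup, sup_comm C, ← sup_assoc, sup_comm T, hNCTK, hKCS]

theorem IsPrimitiveRoot.add_eq_zero_of_inv_pow_eq_pow {K : Type*} [Field K] {ζ : K} {k i j : ℕ}
    (hζ : IsPrimitiveRoot ζ k) (hij : i + j < k) (h : ζ⁻¹ ^ i = ζ ^ j) : i + j = 0 := by
  have hζ0 : ζ ≠ 0 := hζ.ne_zero (by omega)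
  have hpow : ζ ^ (i + j) = 1 := by rw [pow_add, ← h, ← mul_pow, mul_inv_cancel₀ hζ0, one_pow]
  exact Nat.eq_zero_of_dvd_of_lt ((hζ.pow_eq_one_iff_dvd _).mp hpow) hij

theorem IsPrimitiveRoot.exists_eq_inv_pow_or_eq_pow {K : Type*} [Field K] {ζ μ : K} {k : ℕ}
    (hζ : IsPrimitiveRoot ζ k) (hk : Odd k) (hμ : μ ^ k = 1) :
    ∃ j, 2 * j < k ∧ (μ = ζ⁻¹ ^ j ∨ μ = ζ ^ j) := by
  have : NeZero k := ⟨hk.pos.ne'⟩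
  obtain ⟨i, hi, rfl⟩ := hζ.eq_pow_of_pow_eq_one hμ
  by_cases h : 2 * i < k
  · exact ⟨i, h, Or.inr rfl⟩
  · refine ⟨k - i, by obtain ⟨m, rfl⟩ := hk; omega, Or.inl ?_⟩
    rw [inv_pow]
    exact eq_inv_of_mul_eq_one_left (by rw [← pow_add, Nat.add_sub_cancel' hi.le, hζ.pow_eq_one])

theorem Module.End.iSup_eigenspace_eq_top_of_pow_eq_one {K V : Type*} [Field K] [IsAlgClosed K]
    [AddCommGroup V] [Module K V] [FiniteDimensional K V] {f : End K V} {n : ℕ}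
    (hn : (n : K) ≠ 0) (hf : f ^ n = 1) : ⨆ μ, f.eigenspace μ = ⊤ := by
  refine IsSemisimple.iSup_eigenspace_eq_top
    (isSemisimple_of_squarefree_aeval_eq_zero (p := X ^ n - C 1) ?_ (by simp [hf]))
  exact (separable_X_pow_sub_C 1 hn one_ne_zero).squarefree

theorem Module.End.HasEigenvalue.pow_eq_one {K V : Type*} [Field K] [AddCommGroup V]
    [Module K V] {f : End K V} {μ : K} (hμ : f.HasEigenvalue μ) {n : ℕ}
    (hf : f ^ n = 1) : μ ^ n = 1 := by
  obtain ⟨v, hv⟩ := hμ.exists_hasEigenvector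
  have h := hv.pow_apply n
  rw [hf, End.one_apply] at h
  exact (smul_left_injective K hv.2 (h.symm.trans (one_smul K v).symm))

section Eigenspaces

variable {K V : Type*} [Field K] [AddCommGroup V] [Module K V] {ζ : K} {k : ℕ}

theorem Module.End.iSupIndep_eigenspace_inv_pow_sup_pow (f : End K V)
    (hζ : IsPrimitiveRoot ζ k) :
    iSupIndep fun j : Fin ((k - 1) / 2 + 1) =>
      f.eigenspace (ζ⁻¹ ^ (j : ℕ)) ⊔ f.eigenspace (ζ ^ (j : ℕ)) := by
  have hs : Pairwise (Disjoint on fun j : Fin ((k - 1) / 2 + 1) =>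
      ({ζ⁻¹ ^ (j : ℕ), ζ ^ (j : ℕ)} : Set K)) := by
    intro j j' hjj'
    have hj := j.is_lt
    have hj' := j'.is_lt
    have hne : (j : ℕ) ≠ j' := Fin.val_ne_of_ne hjj'
    have hpow : ζ ^ (j : ℕ) ≠ ζ ^ (j' : ℕ) := fun h => hne (hζ.pow_inj (by omega) (by omega) h)
    have hmix : ∀ a b : Fin ((k - 1) / 2 + 1), a ≠ b → ζ⁻¹ ^ (a : ℕ) ≠ ζ ^ (b : ℕ) :=
      fun a b hab h => by
        have := hζ.add_eq_zero_of_inv_pow_eq_pow (by omega) h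
        exact hab (Fin.ext (by omega))
    rw [onFun, Set.disjoint_left]
    rintro μ (rfl | rfl) (h | h)
    · rw [inv_pow, inv_pow, inv_inj] at h
      exact hpow h
    · exact hmix j j' hjj' h
    · exact hmix j' j hjj'.symm (Eq.symm h)
    · exact hpow h
  simpa only [iSup_pair] using f.eigenspaces_iSupIndep.biSup_of_pairwise_disjoint hs

theorem Module.End.iSup_eigenspace_inv_pow_sup_pow_eq_top [IsAlgClosed K] [FiniteDimensional K V]
    {f : End K V} (hζ : IsPrimitiveRoot ζ k) (hk : Odd k) (hkK : (k : K) ≠ 0) (hf : f ^ k = 1) :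
    ⨆ j : Fin ((k - 1) / 2 + 1), f.eigenspace (ζ⁻¹ ^ (j : ℕ)) ⊔ f.eigenspace (ζ ^ (j : ℕ)) = ⊤ := by
  rw [eq_top_iff, ← iSup_eigenspace_eq_top_of_pow_eq_one hkK hf]
  refine iSup_le fun μ => ?_
  by_cases hμ : f.eigenspace μ = ⊥
  · exact hμ ▸ bot_le
  obtain ⟨j, hj, rfl | rfl⟩ := hζ.exists_eq_inv_pow_or_eq_pow hk (HasEigenvalue.pow_eq_one hμ hf)
  · exact le_iSup_of_le ⟨j, by omega⟩ le_sup_left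
  · exact le_iSup_of_le ⟨j, by omega⟩ le_sup_right

end Eigenspaces

theorem DihedralGroup.closure_r_one_sr_zero {n : ℕ} [NeZero n] :
    Submonoid.closure {r 1, sr 0} = (⊤ : Submonoid (DihedralGroup n)) := by
  have hr : ∀ a : ZMod n, r a ∈ Submonoid.closure {r 1, sr 0} := fun a => by
    rw [← ZMod.natCast_zmod_val a, ← r_one_pow]
    exact pow_mem (Submonoid.subset_closure (by simp)) _
  refine eq_top_iff.mpr fun g _ => ?_
  rcases g with a | a
  · exact hr a
  · rw [← zero_add a, ← sr_mul_r]
    exact mul_mem (Submonoid.subset_closure (by simp)) (hr a)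

section Dihedral

variable {F V : Type*} [Field F] [AddCommGroup V] [Module F V] {p : ℕ}
  (θ : Representation F (DihedralGroup p) V)

namespace Representation

theorem dihedral_r_one_pow_eq_one : θ (r 1) ^ p = 1 := by
  rw [← map_pow, r_one_pow_n, map_one]

theorem dihedral_sr_zero_involutive : Involutive (θ (sr 0)) := fun v => by
  rw [← Module.End.mul_apply, ← map_mul, sr_mul_self, map_one, Module.End.one_apply]

theorem dihedral_sr_zero_mem_eigenspace_inv {μ : F} {v : V} (hv : v ∈ eigenspace (θ (r 1)) μ) :
    θ (sr 0) v ∈ eigenspace (θ (r 1)) μ⁻¹ := by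
  rw [Module.End.mem_eigenspace_iff] at hv ⊢
  have hinv : θ (r (-1)) (θ (r 1) v) = v := by
    rw [← Module.End.mul_apply, ← map_mul, r_mul_r, neg_add_cancel, r_zero, map_one,
      Module.End.one_apply]
  have hrs : θ (r 1) (θ (sr 0) v) = θ (sr 0) (θ (r (-1)) v) := by
    rw [← Module.End.mul_apply, ← map_mul, ← Module.End.mul_apply, ← map_mul, r_mul_sr, sr_mul_r]
    simp
  rcases eq_or_ne μ 0 with rfl | hμ
  · rw [hv, zero_smul, map_zero] at hinv
    simp [← hinv]
  · rw [hrs, ← map_smul]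
    congr 1
    rw [hv, map_smul] at hinv
    rw [eq_comm, inv_smul_eq_iff₀ hμ, hinv]

theorem dihedral_map_sr_zero_eigenspace (μ : F) :
    (eigenspace (θ (r 1)) μ).map (θ (sr 0)) = eigenspace (θ (r 1)) μ⁻¹ := by
  refine le_antisymm (map_le_iff_le_comap.mpr fun v hv =>
    dihedral_sr_zero_mem_eigenspace_inv θ hv) fun v hv => ?_
  refine ⟨θ (sr 0) v, ?_, dihedral_sr_zero_involutive θ v⟩
  simpa using dihedral_sr_zero_mem_eigenspace_inv θ hv

variable [NeZero p]

theorem dihedral_mapsTo_of_mapsTo_r_one_sr_zero {W : Submodule F V}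
    (hr : ∀ v ∈ W, θ (r 1) v ∈ W) (hs : ∀ v ∈ W, θ (sr 0) v ∈ W) (g : DihedralGroup p) :
    ∀ v ∈ W, θ g v ∈ W := by
  have hg : g ∈ Submonoid.closure {r 1, sr 0} :=
    closure_r_one_sr_zero (n := p) ▸ Submonoid.mem_top g
  induction hg using Submonoid.closure_induction with
  | mem g hg =>
    rcases hg with rfl | rfl
    exacts [hr, hs]
  | one => simp
  | mul g h _ _ hg hh => exact fun v hv => by simpa using hg _ (hh v hv)

theorem dihedral_apply_eq_self_of_r_one_sr_zero {v : V} (hr : θ (r 1) v = v)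
    (hs : θ (sr 0) v = v) (g : DihedralGroup p) : θ g v = v := by
  have hg : g ∈ Submonoid.closure {r 1, sr 0} :=
    closure_r_one_sr_zero (n := p) ▸ Submonoid.mem_top g
  induction hg using Submonoid.closure_induction with
  | mem g hg =>
    rcases hg with rfl | rfl
    exacts [hr, hs]
  | one => simp
  | mul g h _ _ hg hh => simp [hg, hh]

end Representation

end Dihedral

section Blocks

variable {F V : Type*} [Field F] [AddCommGroup V] [Module F V] {p : ℕ}
  (θ : Representation F (DihedralGroup p) V) (lam : F)

def IsStandardBlock (W : Submodule F V) : Prop :=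
  (finrank F W = 1 ∧ ∀ (g : DihedralGroup p) (v : V), v ∈ W → θ g v = v) ∨
  (∃ i : ℕ, i ≤ (p - 1) / 2 ∧ ∃ v1 v2 : V,
    v1 ∈ W ∧ v2 ∈ W ∧ W = span F {v1, v2} ∧ LinearIndependent F ![v1, v2] ∧
    θ (r 1) v1 = lam⁻¹ ^ i • v1 ∧ θ (r 1) v2 = lam ^ i • v2 ∧
    θ (sr 0) v1 = v2 ∧ θ (sr 0) v2 = v1)

def HasStandardDecomposition (M : Submodule F V) : Prop :=
  ∃ (β : Type) (_ : Finite β) (W : β → Submodule F V),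
    iSupIndep W ∧ ⨆ b, W b = M ∧ ∀ b, IsStandardBlock θ lam (W b)

variable {θ lam}

theorem IsStandardBlock.mapsTo [NeZero p] {W : Submodule F V} (hW : IsStandardBlock θ lam W)
    (g : DihedralGroup p) : ∀ v ∈ W, θ g v ∈ W := by
  rcases hW with ⟨-, hfix⟩ | ⟨i, -, v1, v2, hv1, hv2, rfl, -, hr1, hr2, hs1, hs2⟩
  · exact fun v hv => (hfix g v hv).symm ▸ hv
  · have hspan : ∀ f : V →ₗ[F] V, f v1 ∈ span F {v1, v2} → f v2 ∈ span F {v1, v2} →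
        ∀ v ∈ span F {v1, v2}, f v ∈ span F {v1, v2} := fun f h1 h2 v hv =>
      (span_le (p := (span F {v1, v2}).comap f)).mpr (Set.pair_subset h1 h2) hv
    refine Representation.dihedral_mapsTo_of_mapsTo_r_one_sr_zero θ
      (hspan _ ?_ ?_) (hspan _ (hs1 ▸ hv2) (hs2 ▸ hv1)) g
    · exact hr1 ▸ smul_mem _ _ hv1
    · exact hr2 ▸ smul_mem _ _ hv2

theorem isStandardBlock_span_singleton {v : V} (hv : v ≠ 0) (hfix : ∀ g, θ g v = v) :
    IsStandardBlock θ lam (F ∙ v) := by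
  refine Or.inl ⟨finrank_span_singleton hv, fun g w hw => ?_⟩
  obtain ⟨c, rfl⟩ := mem_span_singleton.mp hw
  rw [map_smul, hfix]

theorem isStandardBlock_span_pair {i : ℕ} (hi : i ≤ (p - 1) / 2) {v : V}
    (hv : θ (r 1) v = lam⁻¹ ^ i • v) (hli : LinearIndependent F ![v, θ (sr 0) v]) :
    IsStandardBlock θ lam (span F {v, θ (sr 0) v}) := by
  have hσv := Representation.dihedral_sr_zero_mem_eigenspace_inv θ (mem_eigenspace_iff.mpr hv)
  rw [inv_pow, inv_inv, mem_eigenspace_iff] at hσv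
  exact Or.inr ⟨i, hi, v, θ (sr 0) v, subset_span (by simp), subset_span (by simp), rfl, hli, hv,
    hσv, rfl, Representation.dihedral_sr_zero_involutive θ v⟩

theorem HasStandardDecomposition.iSup {ι : Type} [Finite ι] {A : ι → Submodule F V}
    (hA : iSupIndep A) (h : ∀ i, HasStandardDecomposition θ lam (A i)) :
    HasStandardDecomposition θ lam (⨆ i, A i) := by
  choose β hβ W hWind hWsup hWstd using h
  refine ⟨Σ i, β i, inferInstance, fun x => W x.1 x.2, ?_, ?_, fun x => hWstd x.1 x.2⟩
  · exact iSupIndep.sigma (by simpa only [hWsup] using hA) hWind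
  · simp only [iSup_sigma, hWsup]

theorem HasStandardDecomposition.sup {A B : Submodule F V} (hAB : Disjoint A B)
    (hA : HasStandardDecomposition θ lam A) (hB : HasStandardDecomposition θ lam B) :
    HasStandardDecomposition θ lam (A ⊔ B) := by
  have hind : iSupIndep fun b : Bool => cond b A B :=
    (iSupIndep_pair (i := true) (j := false) (by decide) (by decide)).mpr hAB
  simpa only [iSup_bool_eq, cond_true, cond_false] using
    HasStandardDecomposition.iSup hind (Bool.rec hB hA)

theorem hasStandardDecomposition_of_forall_apply_eq [FiniteDimensional F V] {T : Submodule F V}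
    (hT : ∀ v ∈ T, ∀ g, θ g v = v) : HasStandardDecomposition θ lam T := by
  let b := Module.finBasis F T
  refine ⟨Fin (finrank F T), inferInstance, fun k => F ∙ (b k : V),
    (b.linearIndependent.map' T.subtype T.ker_subtype).iSupIndep_span_singleton, ?_,
    fun k => isStandardBlock_span_singleton (by simpa using b.ne_zero k) (hT _ (b k).2)⟩
  rw [← span_range_eq_iSup, b.span_range_coe]

theorem hasStandardDecomposition_sup_map [FiniteDimensional F V] {i : ℕ} (hi : i ≤ (p - 1) / 2)
    {D : Submodule F V} (hD : D ≤ eigenspace (θ (r 1)) (lam⁻¹ ^ i))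
    (hdisj : Disjoint D (D.map (θ (sr 0)))) :
    HasStandardDecomposition θ lam (D ⊔ D.map (θ (sr 0))) := by
  let b := Module.finBasis F D
  set σ := θ (sr 0)
  set d : Fin (finrank F D) → V := fun k => b k
  have hd : LinearIndependent F d := b.linearIndependent.map' D.subtype D.ker_subtype
  have hσd : LinearIndependent F (σ ∘ d) := hd.map' σ (LinearMap.ker_eq_bot.mpr
    (Representation.dihedral_sr_zero_involutive θ).injective)
  have hspan : span F (Set.range d) = D := b.span_range_coe
  have hσspan : span F (Set.range (σ ∘ d)) = D.map σ := by
    rw [Set.range_comp, span_image, hspan]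
  have hli : LinearIndependent F (Sum.elim d (σ ∘ d)) :=
    hd.sum_type hσd (by rwa [hspan, hσspan])
  refine ⟨Fin (finrank F D), inferInstance, fun k => span F {d k, σ (d k)},
    hli.iSupIndep_span_pair, ?_, fun k => isStandardBlock_span_pair hi
      (mem_eigenspace_iff.mp (hD (b k).2)) (hli.pair_of_sum_elim k)⟩
  simp only [span_insert, iSup_sup_eq]
  rw [span_range_eq_iSup] at hspan hσspan
  exact congrArg₂ (· ⊔ ·) hspan hσspan

theorem hasStandardDecomposition_eigenspace_one [NeZero p] [CharP F 2] [FiniteDimensional F V] :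
    HasStandardDecomposition θ lam (eigenspace (θ (r 1)) 1) := by
  obtain ⟨T, C, hT, hC, hTC, hsup⟩ :=
    exists_fixed_sup_free_of_involution (S := eigenspace (θ (r 1)) 1)
      (Representation.dihedral_sr_zero_involutive θ) fun v hv => by
        simpa only [inv_one] using Representation.dihedral_sr_zero_mem_eigenspace_inv θ hv
  have hTS : T ≤ eigenspace (θ (r 1)) 1 := hsup ▸ le_sup_left
  have hCS : C ≤ eigenspace (θ (r 1)) (lam⁻¹ ^ 0) := by
    rw [pow_zero, ← hsup]
    exact le_sup_left.trans le_sup_right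
  rw [← hsup]
  refine .sup hTC (hasStandardDecomposition_of_forall_apply_eq fun v hv =>
    Representation.dihedral_apply_eq_self_of_r_one_sr_zero θ ?_ (hT v hv))
    (hasStandardDecomposition_sup_map (Nat.zero_le _) hCS hC)
  simpa using mem_eigenspace_iff.mp (hTS hv)

theorem hasStandardDecomposition_top [IsAlgClosed F] [CharP F 2] [FiniteDimensional F V]
    (hp : Odd p) (hlam : IsPrimitiveRoot lam p) : HasStandardDecomposition θ lam ⊤ := by
  have : NeZero p := ⟨hp.pos.ne'⟩
  have hpF : (p : F) ≠ 0 := by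
    rw [Ne, CharP.cast_eq_zero_iff F 2]
    exact hp.not_two_dvd_nat
  rw [← iSup_eigenspace_inv_pow_sup_pow_eq_top hlam hp hpF
    (Representation.dihedral_r_one_pow_eq_one θ)]
  refine .iSup (iSupIndep_eigenspace_inv_pow_sup_pow _ hlam) fun ⟨j, hj⟩ => ?_
  rcases Nat.eq_zero_or_pos j with rfl | hj0
  · simpa using hasStandardDecomposition_eigenspace_one (θ := θ) (lam := lam)
  have hne : lam⁻¹ ^ j ≠ lam ^ j := fun h => by
    have := hlam.add_eq_zero_of_inv_pow_eq_pow (by obtain ⟨m, rfl⟩ := hp; omega) h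
    omega
  have hmap :
      (eigenspace (θ (r 1)) (lam⁻¹ ^ j)).map (θ (sr 0)) = eigenspace (θ (r 1)) (lam ^ j) := by
    rw [Representation.dihedral_map_sr_zero_eigenspace, inv_pow, inv_inv]
  rw [← hmap]
  exact hasStandardDecomposition_sup_map (by omega) le_rfl
    (hmap ▸ (eigenspaces_iSupIndep _).pairwiseDisjoint hne)

end Blocks

theorem dihedral_decomposition_general
    (p : ℕ) (hp_odd : Odd p)
    (F : Type*) [Field F] [IsAlgClosed F] [CharP F 2]
    (lam : F) (hlam : IsPrimitiveRoot lam p)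
    (V : Type*) [AddCommGroup V] [Module F V] [FiniteDimensional F V]
    (θ : Representation F (DihedralGroup p) V) :
    ∃ (n : ℕ) (W : Fin n → Submodule F V),
      DirectSum.IsInternal W ∧
      (∀ (k : Fin n) (g : DihedralGroup p) (v : V), v ∈ W k → θ g v ∈ W k) ∧
      (∀ k : Fin n,
        (Module.finrank F (W k) = 1 ∧
          ∀ (g : DihedralGroup p) (v : V), v ∈ W k → θ g v = v) ∨
        (∃ i : ℕ, i ≤ (p - 1) / 2 ∧ ∃ v1 v2 : V,
          v1 ∈ W k ∧ v2 ∈ W k ∧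
          W k = Submodule.span F {v1, v2} ∧
          LinearIndependent F ![v1, v2] ∧
          θ (DihedralGroup.r 1) v1 = lam⁻¹ ^ i • v1 ∧
          θ (DihedralGroup.r 1) v2 = lam ^ i • v2 ∧
          θ (DihedralGroup.sr 0) v1 = v2 ∧
          θ (DihedralGroup.sr 0) v2 = v1)) := by
  have : NeZero p := ⟨hp_odd.pos.ne'⟩
  obtain ⟨β, _, W, hind, hsup, hW⟩ := hasStandardDecomposition_top (θ := θ) hp_odd hlam
  obtain ⟨n, ⟨e⟩⟩ := Finite.exists_equiv_fin β
  refine ⟨n, fun k => W (e.symm k), ?_, fun k => (hW _).mapsTo, fun k => hW _⟩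
  rw [DirectSum.isInternal_submodule_iff_iSupIndep_and_iSup_eq_top]
  exact ⟨hind.comp e.symm.injective, by rw [e.symm.iSup_comp, hsup]⟩

/-- Every finite-dimensional `F`-linear representation of the dihedral group
`G = D_{2p}` (`p ≥ 3` odd, `F` algebraically closed of characteristic two)
decomposes as a direct sum of subrepresentations, each of which is isomorphic
either to the one-dimensional trivial representation or to `W_i`
for some `0 ≤ i ≤ (p-1)/2`, where `W_i` has a basis `v1, v2` with
`ρ v1 = λ⁻ⁱ v1`, `ρ v2 = λⁱ v2`, `σ v1 = v2`, `σ v2 = v1`. -/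
theorem dihedral_decomposition
    (p : ℕ) (hp_odd : Odd p) (hp : 3 ≤ p)
    (F : Type*) [Field F] [IsAlgClosed F] [CharP F 2]
    (lam : F) (hlam : IsPrimitiveRoot lam p)
    (V : Type*) [AddCommGroup V] [Module F V] [FiniteDimensional F V]
    (θ : Representation F (DihedralGroup p) V) :
    ∃ (n : ℕ) (W : Fin n → Submodule F V),
      DirectSum.IsInternal W ∧
      (∀ (k : Fin n) (g : DihedralGroup p) (v : V), v ∈ W k → θ g v ∈ W k) ∧
      (∀ k : Fin n,
        (Module.finrank F (W k) = 1 ∧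
          ∀ (g : DihedralGroup p) (v : V), v ∈ W k → θ g v = v) ∨
        (∃ i : ℕ, i ≤ (p - 1) / 2 ∧ ∃ v1 v2 : V,
          v1 ∈ W k ∧ v2 ∈ W k ∧
          W k = Submodule.span F {v1, v2} ∧
          LinearIndependent F ![v1, v2] ∧
          θ (DihedralGroup.r 1) v1 = lam⁻¹ ^ i • v1 ∧
          θ (DihedralGroup.r 1) v2 = lam ^ i • v2 ∧
          θ (DihedralGroup.sr 0) v1 = v2 ∧
          θ (DihedralGroup.sr 0) v2 = v1)) :=
  dihedral_decomposition_general p hp_odd F lam hlam V θ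
end

section
/- The invariant ring F[x,y]^G equals the F-subalgebra of F[x,y] generated by the two polynomials x^p + y^p and xy. -/
/-! With `μ = λ^i`, a primitive `p`-th root of unity, invariance under `ρ` says that every monomial
`x^a y^b` occurring in `f` has `a ≡ b [MOD p]`, and invariance under `σ` that `f` is symmetric.
A symmetric `f` is its diagonal part, a polynomial in `xy`, plus `g + σ g`, where `g` collects the
terms with `a < b`. So it suffices that `x^a y^b + x^b y^a = (xy)^b (x^{pm} + y^{pm})` lies in the
algebra for `a = b + pm`, which follows from `s_{m+2} = s_1 s_{m+1} - (xy)^p s_m` for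
`s_m = x^{pm} + y^{pm}`. Conversely, the generators are fixed by `ρ` and `σ`, which generate `G`. -/

open MvPolynomial

theorem IsPrimitiveRoot.pow_eq_pow_iff_modEq {M₀ : Type*} [CommGroupWithZero M₀] {ζ : M₀}
    {k a b : ℕ} (h : IsPrimitiveRoot ζ k) (hζ : ζ ≠ 0) : ζ ^ a = ζ ^ b ↔ a ≡ b [MOD k] := by
  have hu : IsPrimitiveRoot (Units.mk0 ζ hζ) k := IsPrimitiveRoot.coe_units_iff.1 h
  rw [hu.eq_orderOf, ← _root_.pow_eq_pow_iff_modEq, ← Units.val_inj, Units.val_pow_eq_pow_val,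
    Units.val_pow_eq_pow_val, Units.val_mk0]

namespace DihedralGroup

theorem closure_r_one_sr_zero_s5 (n : ℕ) :
    Subgroup.closure {r 1, sr 0} = (⊤ : Subgroup (DihedralGroup n)) := by
  refine eq_top_iff.2 fun g _ => ?_
  have hr : ∀ k : ZMod n, r k ∈ Subgroup.closure {r 1, sr 0} := fun k => by
    rw [← ZMod.intCast_zmod_cast k, ← r_one_zpow]
    exact Subgroup.zpow_mem _ (Subgroup.subset_closure (by simp)) _
  cases g with
  | r k => exact hr k
  | sr k =>
    rw [← zero_add k, ← sr_mul_r]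
    exact Subgroup.mul_mem _ (Subgroup.subset_closure (by simp)) (hr k)

theorem smul_eq_of_smul_r_one_of_smul_sr_zero {n : ℕ} {M X : Type*} [Group M] [MulAction M X]
    (α : DihedralGroup n →* M) {x : X} (hr : α (r 1) • x = x) (hs : α (sr 0) • x = x)
    (g : DihedralGroup n) : α g • x = x := by
  have : Subgroup.closure {r 1, sr 0} ≤ (MulAction.stabilizer M x).comap α :=
    Subgroup.closure_le _ |>.2 <| by rintro _ (rfl | rfl) <;> assumption
  exact this (closure_r_one_sr_zero_s5 n ▸ Subgroup.mem_top g)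

end DihedralGroup

namespace MvPolynomial

variable {σ R : Type*} [CommSemiring R]

noncomputable def filter (P : (σ →₀ ℕ) → Prop) [DecidablePred P] (f : MvPolynomial σ R) :
    MvPolynomial σ R :=
  ∑ d ∈ f.support with P d, monomial d (coeff d f)

theorem coeff_filter [DecidableEq σ] (P : (σ →₀ ℕ) → Prop) [DecidablePred P]
    (f : MvPolynomial σ R) (e : σ →₀ ℕ) :
    coeff e (f.filter P) = if P e then coeff e f else 0 := by
  rw [filter, coeff_sum]
  simp only [coeff_monomial, Finset.sum_ite_eq', Finset.mem_filter, mem_support_iff]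
  by_cases h : coeff e f = 0 <;> simp [h]

theorem coeff_aeval_C_mul_X (w : σ → R) (f : MvPolynomial σ R) (d : σ →₀ ℕ) :
    coeff d (aeval (fun j => C (w j) * X j) f) = (d.prod fun j k => w j ^ k) * coeff d f := by
  classical
  induction f using MvPolynomial.induction_on' with
  | monomial e r =>
    have : aeval (fun j => C (w j) * X j) (monomial e r) =
        monomial e ((e.prod fun j k => w j ^ k) * r) := by
      rw [aeval_monomial, monomial_eq, C_mul, algebraMap_eq]
      simp only [mul_pow, Finsupp.prod_mul, ← C_pow, ← map_finsuppProd]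
      ring
    rw [this, coeff_monomial, coeff_monomial]
    split_ifs with h <;> simp [h]
  | add f g hf hg => simp only [map_add, coeff_add, hf, hg, mul_add]

theorem coeff_rename_equiv {τ : Type*} (e : σ ≃ τ) (f : MvPolynomial σ R) (d : τ →₀ ℕ) :
    coeff d (rename e f) = coeff (d.equivMapDomain e.symm) f := by
  rw [← coeff_rename_mapDomain e e.injective, Finsupp.equivMapDomain_eq_mapDomain,
    ← Finsupp.mapDomain_comp]
  simp

end MvPolynomial

namespace MvPolynomial

variable {R : Type*} [CommRing R] {n : ℕ} {A : Subalgebra R (MvPolynomial (Fin 2) R)}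

theorem X_pow_mul_add_X_pow_mul_mem (hsum : X 0 ^ n + X 1 ^ n ∈ A) (hprod : X 0 * X 1 ∈ A)
    (m : ℕ) : X 0 ^ (n * m) + X 1 ^ (n * m) ∈ A := by
  induction m using Nat.twoStepInduction with
  | zero =>
    rw [Nat.mul_zero, pow_zero, pow_zero]
    exact add_mem (one_mem A) (one_mem A)
  | one => simpa using hsum
  | more m ih₀ ih₁ =>
    have : X 0 ^ (n * (m + 2)) + X 1 ^ (n * (m + 2)) = (X 0 ^ n + X 1 ^ n) *
        (X 0 ^ (n * (m + 1)) + X 1 ^ (n * (m + 1))) -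
        (X 0 * X 1) ^ n * (X 0 ^ (n * m) + X 1 ^ (n * m) : MvPolynomial (Fin 2) R) := by ring
    rw [this]
    exact sub_mem (mul_mem hsum ih₁) (mul_mem (pow_mem hprod n) ih₀)

theorem X_pow_mul_X_pow_add_mem (hsum : X 0 ^ n + X 1 ^ n ∈ A) (hprod : X 0 * X 1 ∈ A)
    {a b : ℕ} (hab : a ≡ b [MOD n]) : X 0 ^ a * X 1 ^ b + X 0 ^ b * X 1 ^ a ∈ A := by
  wlog hba : b ≤ a generalizing a b
  · rw [add_comm]
    exact this hab.symm (le_of_not_ge hba)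
  obtain ⟨m, rfl⟩ : ∃ m, a = b + n * m :=
    ⟨(a - b) / n, by rw [Nat.mul_div_cancel' ((Nat.modEq_iff_dvd' hba).1 hab.symm)]; omega⟩
  have : X 0 ^ (b + n * m) * X 1 ^ b + X 0 ^ b * X 1 ^ (b + n * m) =
      (X 0 * X 1) ^ b * (X 0 ^ (n * m) + X 1 ^ (n * m) : MvPolynomial (Fin 2) R) := by ring
  rw [this]
  exact mul_mem (pow_mem hprod b) (X_pow_mul_add_X_pow_mul_mem hsum hprod m)

theorem add_rename_swap_mem (hsum : X 0 ^ n + X 1 ^ n ∈ A) (hprod : X 0 * X 1 ∈ A)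
    {f : MvPolynomial (Fin 2) R} (hf : ∀ d ∈ f.support, d 0 ≡ d 1 [MOD n]) :
    f + rename (Equiv.swap 0 1) f ∈ A := by
  rw [f.as_sum, map_sum, ← Finset.sum_add_distrib]
  refine sum_mem fun d hd => ?_
  convert mul_mem (A.algebraMap_mem (coeff d f)) (X_pow_mul_X_pow_add_mem hsum hprod (hf d hd))
    using 1
  simp only [monomial_fin_two, map_mul, map_pow, rename_C, rename_X, Equiv.swap_apply_left,
    Equiv.swap_apply_right, algebraMap_eq]
  ring

theorem mem_of_forall_mem_support_eq (hprod : X 0 * X 1 ∈ A) {f : MvPolynomial (Fin 2) R}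
    (hf : ∀ d ∈ f.support, d 0 = d 1) : f ∈ A := by
  rw [f.as_sum]
  refine sum_mem fun d hd => ?_
  rw [monomial_fin_two, mul_assoc, hf d hd, ← mul_pow]
  exact mul_mem (A.algebraMap_mem _) (pow_mem hprod _)

theorem mem_of_rename_swap_eq (hsum : X 0 ^ n + X 1 ^ n ∈ A) (hprod : X 0 * X 1 ∈ A)
    {f : MvPolynomial (Fin 2) R} (hswap : rename (Equiv.swap 0 1) f = f)
    (hf : ∀ d ∈ f.support, d 0 ≡ d 1 [MOD n]) : f ∈ A := by
  have hdecomp : f = (f.filter (fun d => d 0 < d 1) +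
      rename (Equiv.swap 0 1) (f.filter fun d => d 0 < d 1)) + f.filter fun d => d 0 = d 1 := by
    ext e
    have hsym : coeff e f = coeff (e.equivMapDomain (Equiv.swap 0 1)) f := by
      conv_lhs => rw [← hswap]
      rw [coeff_rename_equiv, Equiv.symm_swap]
    simp only [coeff_add, coeff_rename_equiv, coeff_filter, Equiv.symm_swap, ← hsym,
      Finsupp.equivMapDomain_apply, Equiv.swap_apply_left, Equiv.swap_apply_right]
    rcases lt_trichotomy (e 0) (e 1) with h | h | h
    · simp [h, h.ne, h.asymm]
    · simp [h]
    · simp [h, h.ne', h.asymm]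
  rw [hdecomp]
  refine add_mem (add_rename_swap_mem hsum hprod fun d hd => ?_)
    (mem_of_forall_mem_support_eq hprod fun d hd => ?_)
  all_goals rw [mem_support_iff, coeff_filter] at hd
  · exact hf d (mem_support_iff.2 fun h => hd (by simp [h]))
  · by_contra h
    simp [h] at hd

end MvPolynomial

theorem modEq_of_mem_support_of_aeval_eq {F : Type*} [Field F] {μ : F} {p : ℕ}
    (hμ : IsPrimitiveRoot μ p) (hμ0 : μ ≠ 0) {f : MvPolynomial (Fin 2) F}
    (hf : aeval (fun j => C (![μ, μ⁻¹] j) * X j) f = f) (d : Fin 2 →₀ ℕ) (hd : d ∈ f.support) :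
    d 0 ≡ d 1 [MOD p] := by
  have hcoeff := coeff_aeval_C_mul_X (![μ, μ⁻¹]) f d
  rw [hf, Finsupp.prod_fintype _ _ fun _ => pow_zero _, Fin.prod_univ_two] at hcoeff
  have hd1 : μ ^ d 0 * μ⁻¹ ^ d 1 = 1 :=
    (mul_eq_right₀ (mem_support_iff.1 hd)).1 hcoeff.symm
  rw [inv_pow, mul_inv_eq_one₀ (pow_ne_zero _ hμ0)] at hd1
  exact (hμ.pow_eq_pow_iff_modEq hμ0).1 hd1

theorem invariants_eq_adjoin_of_isPrimitiveRoot {F : Type*} [Field F] {p : ℕ} {μ : F}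
    (hμ : IsPrimitiveRoot μ p) (hμ0 : μ ≠ 0)
    (α : DihedralGroup p →* (MvPolynomial (Fin 2) F ≃ₐ[F] MvPolynomial (Fin 2) F))
    (hρ : ∀ f, α (DihedralGroup.r 1) f = aeval (fun j => C (![μ, μ⁻¹] j) * X j) f)
    (hσ : ∀ f, α (DihedralGroup.sr 0) f = rename (Equiv.swap 0 1) f) :
    {f | ∀ g, α g f = f} =
      (Algebra.adjoin F ({X 0 ^ p + X 1 ^ p, X 0 * X 1} : Set (MvPolynomial (Fin 2) F)) :
        Set (MvPolynomial (Fin 2) F)) := by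
  have hsum : X 0 ^ p + X 1 ^ p ∈
      Algebra.adjoin F ({X 0 ^ p + X 1 ^ p, X 0 * X 1} : Set (MvPolynomial (Fin 2) F)) :=
    Algebra.subset_adjoin (Set.mem_insert _ _)
  have hprod : X 0 * X 1 ∈
      Algebra.adjoin F ({X 0 ^ p + X 1 ^ p, X 0 * X 1} : Set (MvPolynomial (Fin 2) F)) :=
    Algebra.subset_adjoin (Set.mem_insert_of_mem _ rfl)
  have hgen : ∀ x ∈ ({X 0 ^ p + X 1 ^ p, X 0 * X 1} : Set (MvPolynomial (Fin 2) F)),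
      ∀ g, α g x = x := by
    rintro x (rfl | rfl) g <;>
      refine DihedralGroup.smul_eq_of_smul_r_one_of_smul_sr_zero α ?_ ?_ g <;>
      simp only [AlgEquiv.smul_def, hρ, hσ, map_add, map_mul, map_pow, aeval_X, rename_X,
        Equiv.swap_apply_left, Equiv.swap_apply_right, Matrix.cons_val_zero, Matrix.cons_val_one]
    · rw [mul_pow, mul_pow, ← C_pow, ← C_pow, inv_pow, hμ.pow_eq_one, inv_one, C_1, one_mul,
        one_mul]
    · exact add_comm _ _
    · rw [mul_mul_mul_comm, ← C_mul, mul_inv_cancel₀ hμ0, C_1, one_mul]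
    · exact mul_comm _ _
  ext f
  refine ⟨fun hf => mem_of_rename_swap_eq hsum hprod ((hσ f).symm.trans (hf _))
    (modEq_of_mem_support_of_aeval_eq hμ hμ0 ((hρ f).symm.trans (hf _))), fun hf g => ?_⟩
  exact AlgHom.eqOn_adjoin_iff (φ := (α g : MvPolynomial (Fin 2) F →ₐ[F] _))
    (ψ := AlgHom.id F _) |>.2 (fun x hx => hgen x hx g) hf

theorem invariants_Wi_eq_adjoin_general
    (p i : ℕ) (hip : Nat.Coprime i p)
    (F : Type*) [Field F]
    (lam : F) (hlam : IsPrimitiveRoot lam p)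
    (α : DihedralGroup p →*
      (MvPolynomial (Fin 2) F ≃ₐ[F] MvPolynomial (Fin 2) F))
    (hρx : α (DihedralGroup.r 1) (X 0) = C (lam ^ i) * X 0)
    (hρy : α (DihedralGroup.r 1) (X 1) = C (lam⁻¹ ^ i) * X 1)
    (hσx : α (DihedralGroup.sr 0) (X 0) = X 1)
    (hσy : α (DihedralGroup.sr 0) (X 1) = X 0) :
    { f : MvPolynomial (Fin 2) F | ∀ g : DihedralGroup p, α g f = f } =
    (Algebra.adjoin F
      ({X 0 ^ p + X 1 ^ p, X 0 * X 1} : Set (MvPolynomial (Fin 2) F)) :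
      Set (MvPolynomial (Fin 2) F)) := by
  rw [inv_pow] at hρy
  have hμ0 : lam ^ i ≠ 0 := fun h => X_ne_zero (0 : Fin 2) <|
    (α (DihedralGroup.r 1)).injective <| by rw [hρx, h, C_0, zero_mul, map_zero]
  refine invariants_eq_adjoin_of_isPrimitiveRoot (hlam.pow_of_coprime i hip) hμ0 α
    (fun f => ?_) (fun f => ?_)
  · have hρ : (α (DihedralGroup.r 1) : MvPolynomial (Fin 2) F →ₐ[F] MvPolynomial (Fin 2) F) =
        aeval fun j => C (![lam ^ i, (lam ^ i)⁻¹] j) * X j :=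
      algHom_ext fun j => by fin_cases j <;> simp [hρx, hρy]
    exact DFunLike.congr_fun hρ f
  · have hσ : (α (DihedralGroup.sr 0) : MvPolynomial (Fin 2) F →ₐ[F] MvPolynomial (Fin 2) F) =
        rename (Equiv.swap 0 1) :=
      algHom_ext fun j => by fin_cases j <;> simp [hσx, hσy]
    exact DFunLike.congr_fun hσ f

/-- For the faithful two-dimensional representation `W_i` of `G = D_{2p}`
(`p ≥ 3` odd, `1 ≤ i ≤ (p-1)/2` with `gcd(i,p) = 1`, `F` algebraically closed
of characteristic two), with `G` acting on `F[x,y]` by `ρ(x) = λ^i x`,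
`ρ(y) = λ^{-i} y`, `σ(x) = y`, `σ(y) = x`, the invariant ring `F[x,y]^G`
equals the `F`-subalgebra generated by `x^p + y^p` and `xy`.
Here `x = X 0` and `y = X 1` in `MvPolynomial (Fin 2) F`. -/
theorem invariants_Wi_eq_adjoin
    (p i : ℕ) (hp_odd : Odd p) (hp : 3 ≤ p)
    (hi1 : 1 ≤ i) (hi2 : i ≤ (p - 1) / 2) (hip : Nat.Coprime i p)
    (F : Type*) [Field F] [IsAlgClosed F] [CharP F 2]
    (lam : F) (hlam : IsPrimitiveRoot lam p)
    (α : DihedralGroup p →*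
      (MvPolynomial (Fin 2) F ≃ₐ[F] MvPolynomial (Fin 2) F))
    (hρx : α (DihedralGroup.r 1) (X 0) = C (lam ^ i) * X 0)
    (hρy : α (DihedralGroup.r 1) (X 1) = C (lam⁻¹ ^ i) * X 1)
    (hσx : α (DihedralGroup.sr 0) (X 0) = X 1)
    (hσy : α (DihedralGroup.sr 0) (X 1) = X 0) :
    { f : MvPolynomial (Fin 2) F | ∀ g : DihedralGroup p, α g f = f } =
    (Algebra.adjoin F
      ({X 0 ^ p + X 1 ^ p, X 0 * X 1} : Set (MvPolynomial (Fin 2) F)) :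
      Set (MvPolynomial (Fin 2) F)) :=
  invariants_Wi_eq_adjoin_general p i hip F lam hlam α hρx hρy hσx hσy
end

section
/- Two points (a,b) and (a',b') of F² lie in the same G-orbit if and only if ab = a'b' and a^p + b^p = a'^p + b'^p. In other words, the two invariants xy and x^p + y^p form a separating set for this action, and they separate exactly the G-orbits. -/
/-!
Writing `μ = λ^i`, a primitive `p`-th root of unity, the orbit of `(a, b)` consists of the points
`(c a, c⁻¹ b)` and `(c b, c⁻¹ a)` with `cᵖ = 1`. Conversely, if `ab = a'b'` and `aᵖ + bᵖ = a'ᵖ + b'ᵖ`,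
then `{aᵖ, bᵖ}` and `{a'ᵖ, b'ᵖ}` have the same sum and product, hence coincide; in either matching
the ratio `c` of matched coordinates is a `p`-th root of unity, and `ab = a'b'` forces the other
pair to differ by `c⁻¹`.
-/

open DihedralGroup

theorem eq_and_eq_or_eq_and_eq_of_add_eq_add_of_mul_eq_mul {R : Type*} [CommRing R] [IsDomain R]
    {x y x' y' : R} (hadd : x + y = x' + y') (hmul : x * y = x' * y') :
    (x = x' ∧ y = y') ∨ (x = y' ∧ y = x') := by
  have hroots : (x - x') * (x - y') = 0 := by linear_combination x * hadd - hmul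
  rcases mul_eq_zero.mp hroots with h | h
  · exact .inl ⟨by linear_combination h, by linear_combination hadd - h⟩
  · exact .inr ⟨by linear_combination h, by linear_combination hadd - h⟩

section RootOfUnityScaling

variable {F : Type*} [Field F] {n : ℕ} {a b a' b' : F}

theorem exists_pow_eq_one_scale_iff (hn : n ≠ 0) :
    (∃ c : F, c ^ n = 1 ∧ a' = c * a ∧ b' = c⁻¹ * b) ↔
      a * b = a' * b' ∧ a ^ n = a' ^ n ∧ b ^ n = b' ^ n := by
  constructor
  · rintro ⟨c, hc, rfl, rfl⟩
    have hc0 : c ≠ 0 := by rintro rfl; simp [zero_pow hn] at hc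
    exact ⟨by field_simp, by rw [mul_pow, hc, one_mul],
      by rw [mul_pow, inv_pow, hc, inv_one, one_mul]⟩
  · rintro ⟨hmul, ha, hb⟩
    by_cases ha0 : a = 0
    · have ha'0 : a' = 0 := (pow_eq_zero_iff hn).mp (by rw [← ha, ha0, zero_pow hn])
      by_cases hb0 : b = 0
      · have hb'0 : b' = 0 := (pow_eq_zero_iff hn).mp (by rw [← hb, hb0, zero_pow hn])
        exact ⟨1, one_pow n, by simp [ha0, ha'0], by simp [hb0, hb'0]⟩
      · have hb'0 : b' ≠ 0 := by rintro rfl; simp [zero_pow hn, hb0] at hb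
        refine ⟨b / b', by rw [div_pow, hb, div_self (pow_ne_zero n hb'0)], by simp [ha0, ha'0], ?_⟩
        field_simp
    · have ha'0 : a' ≠ 0 := by rintro rfl; simp [zero_pow hn, ha0] at ha
      refine ⟨a' / a, by rw [div_pow, ha, div_self (pow_ne_zero n ha'0)], by field_simp, ?_⟩
      field_simp
      linear_combination -hmul

theorem exists_pow_eq_one_scale_or_swap_iff (hn : n ≠ 0) :
    (∃ c : F, c ^ n = 1 ∧ (a' = c * a ∧ b' = c⁻¹ * b ∨ a' = c * b ∧ b' = c⁻¹ * a)) ↔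
      a * b = a' * b' ∧ a ^ n + b ^ n = a' ^ n + b' ^ n := by
  simp only [and_or_left, exists_or, exists_pow_eq_one_scale_iff hn]
  constructor
  · rintro (⟨hmul, ha, hb⟩ | ⟨hmul, hb, ha⟩)
    · exact ⟨hmul, by rw [ha, hb]⟩
    · exact ⟨by rw [mul_comm, hmul], by rw [ha, hb, add_comm]⟩
  · rintro ⟨hmul, hadd⟩
    have hpow : a ^ n * b ^ n = a' ^ n * b' ^ n := by rw [← mul_pow, ← mul_pow, hmul]
    rcases eq_and_eq_or_eq_and_eq_of_add_eq_add_of_mul_eq_mul hadd hpow with ⟨ha, hb⟩ | ⟨ha, hb⟩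
    · exact .inl ⟨hmul, ha, hb⟩
    · exact .inr ⟨by rw [mul_comm, hmul], hb, ha⟩

end RootOfUnityScaling

section DihedralAction

variable {F : Type*} [Field F] {n : ℕ} (θ : Representation F (DihedralGroup n) (F × F)) {μ : F}

theorem apply_r_natCast (hρ : ∀ a b : F, θ (r 1) (a, b) = (μ⁻¹ * a, μ * b)) (k : ℕ) (a b : F) :
    θ (r k) (a, b) = (μ⁻¹ ^ k * a, μ ^ k * b) := by
  induction k generalizing a b with
  | zero => simp [r_zero]
  | succ k ih =>
    rw [← r_one_pow, pow_succ, map_mul, Module.End.mul_apply, hρ, r_one_pow, ih]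
    simp only [pow_succ, mul_assoc]

theorem apply_sr_natCast (hρ : ∀ a b : F, θ (r 1) (a, b) = (μ⁻¹ * a, μ * b))
    (hσ : ∀ a b : F, θ (sr 0) (a, b) = (b, a)) (k : ℕ) (a b : F) :
    θ (sr k) (a, b) = (μ ^ k * b, μ⁻¹ ^ k * a) := by
  rw [← zero_add (k : ZMod n), ← sr_mul_r, map_mul, Module.End.mul_apply, apply_r_natCast θ hρ, hσ]

theorem exists_apply_eq_iff_exists_pow_eq_one [NeZero n] (hμ : IsPrimitiveRoot μ n)
    (hρ : ∀ a b : F, θ (r 1) (a, b) = (μ⁻¹ * a, μ * b))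
    (hσ : ∀ a b : F, θ (sr 0) (a, b) = (b, a)) (a b a' b' : F) :
    (∃ g : DihedralGroup n, θ g (a, b) = (a', b')) ↔
      ∃ c : F, c ^ n = 1 ∧ (a' = c * a ∧ b' = c⁻¹ * b ∨ a' = c * b ∧ b' = c⁻¹ * a) := by
  have hμ0 : μ ≠ 0 := hμ.ne_zero (NeZero.ne n)
  constructor
  · rintro ⟨g | g, hg⟩
    · rw [← ZMod.natCast_zmod_val g, apply_r_natCast θ hρ, Prod.mk.injEq] at hg
      refine ⟨μ⁻¹ ^ g.val, ?_, .inl ⟨hg.1.symm, ?_⟩⟩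
      · rw [← pow_mul, mul_comm, pow_mul, inv_pow, hμ.pow_eq_one, inv_one, one_pow]
      · rw [← hg.2, inv_pow, inv_inv]
    · rw [← ZMod.natCast_zmod_val g, apply_sr_natCast θ hρ hσ, Prod.mk.injEq] at hg
      refine ⟨μ ^ g.val, ?_, .inr ⟨hg.1.symm, ?_⟩⟩
      · rw [← pow_mul, mul_comm, pow_mul, hμ.pow_eq_one, one_pow]
      · rw [← hg.2, inv_pow]
  · rintro ⟨c, hc, ⟨rfl, rfl⟩ | ⟨rfl, rfl⟩⟩
    · obtain ⟨k, -, hk⟩ := hμ.eq_pow_of_pow_eq_one (ξ := c⁻¹) (by rw [inv_pow, hc, inv_one])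
      exact ⟨r k, by rw [apply_r_natCast θ hρ, inv_pow, hk, inv_inv]⟩
    · obtain ⟨k, -, rfl⟩ := hμ.eq_pow_of_pow_eq_one hc
      exact ⟨sr k, by rw [apply_sr_natCast θ hρ hσ, inv_pow]⟩

end DihedralAction

theorem orbit_iff_invariants_agree_general
    (p i : ℕ) (hp_odd : Odd p)
    (hip : Nat.Coprime i p)
    (F : Type*) [Field F]
    (lam : F) (hlam : IsPrimitiveRoot lam p)
    (θ : Representation F (DihedralGroup p) (F × F))
    (hρ : ∀ a b : F, θ (DihedralGroup.r 1) (a, b) = (lam⁻¹ ^ i * a, lam ^ i * b))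
    (hσ : ∀ a b : F, θ (DihedralGroup.sr 0) (a, b) = (b, a))
    (a b a' b' : F) :
    (∃ g : DihedralGroup p, θ g (a, b) = (a', b')) ↔
      (a * b = a' * b' ∧ a ^ p + b ^ p = a' ^ p + b' ^ p) := by
  have hp : p ≠ 0 := hp_odd.pos.ne'
  have : NeZero p := ⟨hp⟩
  have hρ' : ∀ a b : F, θ (r 1) (a, b) = ((lam ^ i)⁻¹ * a, lam ^ i * b) := by
    simpa only [inv_pow] using hρ
  rw [exists_apply_eq_iff_exists_pow_eq_one θ (hlam.pow_of_coprime i hip) hρ' hσ,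
    exists_pow_eq_one_scale_or_swap_iff hp]

/-- For the faithful two-dimensional representation `W_i` of `G = D_{2p}`
(`p ≥ 3` odd, `1 ≤ i ≤ (p-1)/2` with `gcd(i,p) = 1`, `F` algebraically closed
of characteristic two), where `G` acts on `F²` by `ρ·(a,b) = (λ^{-i}a, λ^{i}b)`
and `σ·(a,b) = (b,a)`, two points `(a,b)` and `(a',b')` lie in the same
`G`-orbit if and only if `ab = a'b'` and `a^p + b^p = a'^p + b'^p`; that is,
the invariants `xy` and `x^p + y^p` separate exactly the `G`-orbits. -/
theorem orbit_iff_invariants_agree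
    (p i : ℕ) (hp_odd : Odd p) (hp : 3 ≤ p)
    (hi1 : 1 ≤ i) (hi2 : i ≤ (p - 1) / 2) (hip : Nat.Coprime i p)
    (F : Type*) [Field F] [IsAlgClosed F] [CharP F 2]
    (lam : F) (hlam : IsPrimitiveRoot lam p)
    (θ : Representation F (DihedralGroup p) (F × F))
    (hρ : ∀ a b : F, θ (DihedralGroup.r 1) (a, b) = (lam⁻¹ ^ i * a, lam ^ i * b))
    (hσ : ∀ a b : F, θ (DihedralGroup.sr 0) (a, b) = (b, a))
    (a b a' b' : F) :
    (∃ g : DihedralGroup p, θ g (a, b) = (a', b')) ↔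
      (a * b = a' * b' ∧ a ^ p + b ^ p = a' ^ p + b' ^ p) :=
  orbit_iff_invariants_agree_general p i hp_odd hip F lam hlam θ hρ hσ a b a' b'
end

section
/- The polynomial z x^p + w y^p ∈ F[x,y,z,w] is G-invariant, and it satisfies (z x^p + w y^p)(v_1) = 0 while (z x^p + w y^p)(v_2) = 1. In particular, v_1 and v_2 lie in different G-orbits of V. -/
open MvPolynomial

/-!
Rotation multiplies `x^p` and `y^p` by `λ^p = 1` and `λ^{-p} = 1`, and the reflection swaps the
two monomials `z x^p` and `w y^p`; since `ρ` and `σ` generate `D_{2p}`, the polynomial is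
invariant. An invariant polynomial is constant on orbits, and it takes different values at
`v₁` and `v₂`.
-/

namespace DihedralGroup

theorem eq_top_of_r_one_mem_of_sr_zero_mem {n : ℕ} {H : Subgroup (DihedralGroup n)}
    (hr : r 1 ∈ H) (hs : sr 0 ∈ H) : H = ⊤ := by
  have hr_mem (i : ZMod n) : r i ∈ H := by
    rw [← ZMod.intCast_zmod_cast i, ← r_one_zpow]
    exact H.zpow_mem hr _
  refine eq_top_iff.mpr fun g _ => ?_
  rcases g with i | i
  · exact hr_mem i
  · simpa only [sr_mul_r, zero_add] using H.mul_mem hs (hr_mem i)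

theorem smul_eq_of_r_one_smul_of_sr_zero_smul {n : ℕ} {M X : Type*} [Group M] [MulAction M X]
    (φ : DihedralGroup n →* M) {x : X} (hr : φ (r 1) • x = x) (hs : φ (sr 0) • x = x)
    (g : DihedralGroup n) : φ g • x = x := by
  have hstab : (MulAction.stabilizer M x).comap φ = ⊤ :=
    eq_top_of_r_one_mem_of_sr_zero_mem hr hs
  exact (hstab ▸ Subgroup.mem_top g : g ∈ (MulAction.stabilizer M x).comap φ)

end DihedralGroup

section Invariance

variable {F : Type*} [Field F] (e : MvPolynomial (Fin 4) F ≃ₐ[F] MvPolynomial (Fin 4) F)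

theorem zxp_wyp_fixed_of_scale {p : ℕ} {lam : F} (hlam : lam ^ p = 1)
    (hx : e (X 0) = C lam * X 0) (hy : e (X 1) = C lam⁻¹ * X 1)
    (hz : e (X 2) = X 2) (hw : e (X 3) = X 3) :
    e (X 2 * X 0 ^ p + X 3 * X 1 ^ p) = X 2 * X 0 ^ p + X 3 * X 1 ^ p := by
  simp only [map_add, map_mul, map_pow, hx, hy, hz, hw, mul_pow, ← C_pow, inv_pow, hlam,
    inv_one, map_one, one_mul]

theorem zxp_wyp_fixed_of_swap (p : ℕ) (hx : e (X 0) = X 1) (hy : e (X 1) = X 0)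
    (hz : e (X 2) = X 3) (hw : e (X 3) = X 2) :
    e (X 2 * X 0 ^ p + X 3 * X 1 ^ p) = X 2 * X 0 ^ p + X 3 * X 1 ^ p := by
  simp only [map_add, map_mul, map_pow, hx, hy, hz, hw]
  ring

end Invariance

theorem eval_representation_apply_of_forall_fixed {G σ R : Type*} [Group G] [CommRing R]
    (θ : Representation R G (σ → R)) (α : G →* (MvPolynomial σ R ≃ₐ[R] MvPolynomial σ R))
    {f : MvPolynomial σ R} (hcompat : ∀ (g : G) (v : σ → R), eval v (α g f) = eval (θ g⁻¹ v) f)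
    (hf : ∀ g, α g f = f) (g : G) (v : σ → R) : eval (θ g v) f = eval v f := by
  simpa only [hf, inv_inv] using (hcompat g⁻¹ v).symm

theorem zxp_wyp_invariant_separates_general
    (p : ℕ) (hp_odd : Odd p)
    (F : Type*) [Field F]
    (lam : F) (hlam : IsPrimitiveRoot lam p)
    (θ : Representation F (DihedralGroup p) (Fin 4 → F))
    (α : DihedralGroup p →*
      (MvPolynomial (Fin 4) F ≃ₐ[F] MvPolynomial (Fin 4) F))
    (hρx : α (DihedralGroup.r 1) (X 0) = C lam * X 0)
    (hρy : α (DihedralGroup.r 1) (X 1) = C lam⁻¹ * X 1)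
    (hρz : α (DihedralGroup.r 1) (X 2) = X 2)
    (hρw : α (DihedralGroup.r 1) (X 3) = X 3)
    (hσx : α (DihedralGroup.sr 0) (X 0) = X 1)
    (hσy : α (DihedralGroup.sr 0) (X 1) = X 0)
    (hσz : α (DihedralGroup.sr 0) (X 2) = X 3)
    (hσw : α (DihedralGroup.sr 0) (X 3) = X 2)
    (hcompat : ∀ (g : DihedralGroup p) (f : MvPolynomial (Fin 4) F) (v : Fin 4 → F),
      eval v (α g f) = eval (θ g⁻¹ v) f) :
    (∀ g : DihedralGroup p,
        α g (X 2 * X 0 ^ p + X 3 * X 1 ^ p) = X 2 * X 0 ^ p + X 3 * X 1 ^ p) ∧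
    eval ![0, 1, 1, 0] (X 2 * X 0 ^ p + X 3 * X 1 ^ p : MvPolynomial (Fin 4) F) = 0 ∧
    eval ![0, 1, 0, 1] (X 2 * X 0 ^ p + X 3 * X 1 ^ p : MvPolynomial (Fin 4) F) = 1 ∧
    ¬ ∃ g : DihedralGroup p, θ g ![0, 1, 1, 0] = ![0, 1, 0, 1] := by
  have hinv (g : DihedralGroup p) :
      α g (X 2 * X 0 ^ p + X 3 * X 1 ^ p) = X 2 * X 0 ^ p + X 3 * X 1 ^ p :=
    DihedralGroup.smul_eq_of_r_one_smul_of_sr_zero_smul α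
      (zxp_wyp_fixed_of_scale _ hlam.pow_eq_one hρx hρy hρz hρw)
      (zxp_wyp_fixed_of_swap _ p hσx hσy hσz hσw) g
  have hv₁ : eval ![0, 1, 1, 0] (X 2 * X 0 ^ p + X 3 * X 1 ^ p : MvPolynomial (Fin 4) F) = 0 := by
    simp [zero_pow hp_odd.pos.ne']
  have hv₂ : eval ![0, 1, 0, 1] (X 2 * X 0 ^ p + X 3 * X 1 ^ p : MvPolynomial (Fin 4) F) = 1 := by
    simp
  refine ⟨hinv, hv₁, hv₂, fun ⟨g, hg⟩ => ?_⟩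
  have h := eval_representation_apply_of_forall_fixed θ α (hcompat · _) hinv g ![0, 1, 1, 0]
  rw [hg, hv₁, hv₂] at h
  exact one_ne_zero h

/-- For `V = W_1 ⊕ W_0 = F⁴` (points `(a,b,c,d)`, `G = D_{2p}` acting by
`ρ·(a,b,c,d) = (λ⁻¹a, λb, c, d)`, `σ·(a,b,c,d) = (b,a,d,c)`), with the induced
action on `F[V] = F[x,y,z,w]` (`x = X 0`, `y = X 1`, `z = X 2`, `w = X 3`,
`(g·f)(v) = f(g⁻¹·v)`): the polynomial `z x^p + w y^p` is `G`-invariant, takes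
the value `0` at `v₁ = (0,1,1,0)` and the value `1` at `v₂ = (0,1,0,1)`;
in particular `v₁` and `v₂` lie in different `G`-orbits. -/
theorem zxp_wyp_invariant_separates
    (p : ℕ) (hp_odd : Odd p) (hp : 3 ≤ p)
    (F : Type*) [Field F] [IsAlgClosed F] [CharP F 2]
    (lam : F) (hlam : IsPrimitiveRoot lam p)
    (θ : Representation F (DihedralGroup p) (Fin 4 → F))
    (hθρ : ∀ v : Fin 4 → F,
      θ (DihedralGroup.r 1) v = ![lam⁻¹ * v 0, lam * v 1, v 2, v 3])
    (hθσ : ∀ v : Fin 4 → F,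
      θ (DihedralGroup.sr 0) v = ![v 1, v 0, v 3, v 2])
    (α : DihedralGroup p →*
      (MvPolynomial (Fin 4) F ≃ₐ[F] MvPolynomial (Fin 4) F))
    (hρx : α (DihedralGroup.r 1) (X 0) = C lam * X 0)
    (hρy : α (DihedralGroup.r 1) (X 1) = C lam⁻¹ * X 1)
    (hρz : α (DihedralGroup.r 1) (X 2) = X 2)
    (hρw : α (DihedralGroup.r 1) (X 3) = X 3)
    (hσx : α (DihedralGroup.sr 0) (X 0) = X 1)
    (hσy : α (DihedralGroup.sr 0) (X 1) = X 0)
    (hσz : α (DihedralGroup.sr 0) (X 2) = X 3)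
    (hσw : α (DihedralGroup.sr 0) (X 3) = X 2)
    (hcompat : ∀ (g : DihedralGroup p) (f : MvPolynomial (Fin 4) F) (v : Fin 4 → F),
      eval v (α g f) = eval (θ g⁻¹ v) f) :
    (∀ g : DihedralGroup p,
        α g (X 2 * X 0 ^ p + X 3 * X 1 ^ p) = X 2 * X 0 ^ p + X 3 * X 1 ^ p) ∧
    eval ![0, 1, 1, 0] (X 2 * X 0 ^ p + X 3 * X 1 ^ p : MvPolynomial (Fin 4) F) = 0 ∧
    eval ![0, 1, 0, 1] (X 2 * X 0 ^ p + X 3 * X 1 ^ p : MvPolynomial (Fin 4) F) = 1 ∧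
    ¬ ∃ g : DihedralGroup p, θ g ![0, 1, 1, 0] = ![0, 1, 0, 1] :=
  zxp_wyp_invariant_separates_general p hp_odd F lam hlam θ α hρx hρy hρz hρw hσx hσy hσz hσw
    hcompat
end

section
/- Suppose S ⊆ F[V']^G is a separating set for V'. Then S ∪ T, where T = {x_r y_r, x_r^p + y_r^p, f_i, g_i, f_{i,j}, h_j : 1 ≤ i ≤ r-1, 1 ≤ j ≤ s} and the elements of S are regarded as elements of F[V]^G via the inclusion F[V'] ⊆ F[V], is a separating set for V. -/
/-!
Invariants of a finite group separate its orbits: if `h` vanishes at `v` and is `1` on the orbit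
of `u`, the invariant `∏ g, g • h` tells `u` and `v` apart. Hence the values of `S` put the
projections of `u` and `v` to `V'` in one orbit, and moving `u` inside its orbit (the elements
of `T` are invariant) we may assume that `u` and `v` differ only in the last pair, `(A, B)`
against `(A', B')`. Then `x_r y_r` and `x_r^p + y_r^p` give `{A'^p, B'^p} = {A^p, B^p}`, so
`(A', B')` is `(ζ A, ζ⁻¹ B)` or `(γ⁻¹ B, γ A)` with `ζ^p = γ^p = 1`. In the first case, unless
`ζ = 1` or all other pairs vanish (then a rotation moves `u` to `v`), the `f_i`, `g_i` and
`f_{i,j}` force `y_i^{n_i} = γ x_i^{n_i}`, `y_i^p = x_i^p` and `z = w` for `γ = B / (ζ A)`; in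
the second case the `f_i`, `g_i` and `h_j` force the same with the given `γ`. These identities
say exactly that a reflection `σρ^k` with `λ^{k m_r} = γ⁻¹` moves `u` to `v`, because `p` and
`n_i` are coprime and `n_i m_i ≡ m_r`.
-/

open MvPolynomial

theorem eq_and_eq_or_eq_and_eq_of_add_eq_of_mul_eq {R : Type*} [CommRing R] [IsDomain R]
    {x y x' y' : R} (hs : x + y = x' + y') (hm : x * y = x' * y') :
    (x' = x ∧ y' = y) ∨ (x' = y ∧ y' = x) := by
  have : (x' - x) * (x' - y) = 0 := by linear_combination (-x') * hs + hm
  rcases mul_eq_zero.mp this with h | h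
  · exact Or.inl ⟨by linear_combination h, by linear_combination -hs - h⟩
  · exact Or.inr ⟨by linear_combination h, by linear_combination -hs - h⟩

theorem pow_pow_eq_of_modEq {M : Type*} [Monoid M] {η : M} {p a b c : ℕ} (hη : η ^ p = 1)
    (h : b * a ≡ c [MOD p]) : (η ^ a) ^ b = η ^ c := by
  rw [← pow_mul, mul_comm, pow_eq_pow_mod _ hη, h, ← pow_eq_pow_mod _ hη]

theorem IsPrimitiveRoot.exists_pow_eq_one_and_pow_eq {R : Type*} [CommRing R] [IsDomain R]
    {lam ζ : R} {p a : ℕ} [NeZero p] (hlam : IsPrimitiveRoot lam p) (ha : a.Coprime p)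
    (hζ : ζ ^ p = 1) : ∃ η : R, η ^ p = 1 ∧ η ^ a = ζ := by
  obtain ⟨k, -, hk⟩ := (hlam.pow_of_coprime a ha).eq_pow_of_pow_eq_one hζ
  refine ⟨lam ^ k, ?_, ?_⟩
  · rw [← pow_mul, mul_comm, pow_mul, hlam.pow_eq_one, one_pow]
  · rw [← pow_mul, mul_comm, pow_mul, hk]

section Field

variable {F : Type*} [Field F]

theorem eq_of_pow_eq_of_pow_eq_of_coprime {m n : ℕ} (hm0 : m ≠ 0) (hmn : m.Coprime n) {x y : F}
    (hm : x ^ m = y ^ m) (hn : x ^ n = y ^ n) : x = y := by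
  rcases eq_or_ne y 0 with rfl | hy
  · simpa [hm0] using hm
  rw [← div_eq_one_iff_eq hy, ← pow_eq_one_iff_of_coprime hmn]
  simp only [div_pow, hm, hn, div_self (pow_ne_zero _ hy), and_self]

theorem exists_pow_eq_one_of_mul_eq_mul {p : ℕ} (hp : p ≠ 0) {x y x' y' : F}
    (hm : x * y = x' * y') (hx : x' ^ p = x ^ p) (hy : y' ^ p = y ^ p) :
    ∃ ζ : F, ζ ^ p = 1 ∧ x' = ζ * x ∧ y' = ζ⁻¹ * y := by
  rcases eq_or_ne x 0 with rfl | hx0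
  · have hx' : x' = 0 := by simpa [hp] using hx
    rcases eq_or_ne y 0 with rfl | hy0
    · exact ⟨1, one_pow p, by simp [hx'], by simpa [hp] using hy⟩
    have hy' : y' ≠ 0 := fun h => hy0 (by simpa [h, hp, eq_comm] using hy)
    refine ⟨y / y', by rw [div_pow, hy, div_self (pow_ne_zero p hy0)], by simp [hx'], ?_⟩
    field_simp
  · have hx' : x' ≠ 0 := fun h => hx0 (by simpa [h, hp, eq_comm] using hx)
    refine ⟨x' / x, by rw [div_pow, hx, div_self (pow_ne_zero p hx0)], by field_simp, ?_⟩
    field_simp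
    linear_combination -hm

theorem mul_eq_of_add_eq_mul_add_inv_mul {ζ P Q : F} (hζ0 : ζ ≠ 0) (hζ1 : ζ ≠ 1)
    (h : P + Q = ζ * P + ζ⁻¹ * Q) : ζ * P = Q := by
  have : (ζ - 1) * (ζ * P - Q) = 0 := by
    linear_combination (-ζ) * h + (-Q) * mul_inv_cancel₀ hζ0
  exact sub_eq_zero.mp ((mul_eq_zero.mp this).resolve_left (sub_ne_zero.mpr hζ1))

theorem eq_mul_of_add_eq_inv_mul_add_mul {γ A B x y : F} (hγ0 : γ ≠ 0) (hAB : A ≠ γ⁻¹ * B)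
    (h : A * x + B * y = γ⁻¹ * B * x + γ * A * y) : x = γ * y := by
  have : (A - γ⁻¹ * B) * (x - γ * y) = 0 := by
    linear_combination h + (B * y) * inv_mul_cancel₀ hγ0
  exact sub_eq_zero.mp ((mul_eq_zero.mp this).resolve_left (sub_ne_zero.mpr hAB))

end Field

namespace MvPolynomial

variable {σ F : Type*} [Field F]

theorem exists_eval_eq_zero_and_eval_eq_one (Q : Finset (σ → F)) {y : σ → F} (hy : y ∉ Q) :
    ∃ h : MvPolynomial σ F, eval y h = 0 ∧ ∀ x ∈ Q, eval x h = 1 := by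
  have separate : ∀ x ∈ Q, ∃ ℓ : MvPolynomial σ F, eval x ℓ = 0 ∧ eval y ℓ = 1 := by
    intro x hx
    obtain ⟨i, hi⟩ := Function.ne_iff.mp (ne_of_mem_of_not_mem hx hy)
    refine ⟨C (y i - x i)⁻¹ * (X i - C (x i)), by simp, ?_⟩
    simp [inv_mul_cancel₀ (sub_ne_zero.mpr hi.symm)]
  choose! ℓ hℓx hℓy using separate
  refine ⟨1 - ∏ x ∈ Q, ℓ x, by simp [Finset.prod_eq_one hℓy], fun x hx => ?_⟩
  simp [Finset.prod_eq_zero (f := fun z => eval x (ℓ z)) hx (hℓx x hx)]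

variable {G : Type*} [Group G]

/-- The right action on points dual to `β`: if `β g` is `f ↦ f ∘ g⁻¹`, then
`pointAct β g u = g⁻¹ • u`. -/
noncomputable def pointAct (β : G →* (MvPolynomial σ F ≃ₐ[F] MvPolynomial σ F)) (g : G)
    (u : σ → F) : σ → F :=
  fun i => eval u (β g (X i))

variable (β : G →* (MvPolynomial σ F ≃ₐ[F] MvPolynomial σ F))

theorem eval_pointAct (g : G) (u : σ → F) (f : MvPolynomial σ F) :
    eval (pointAct β g u) f = eval u (β g f) := by
  induction f using MvPolynomial.induction_on with
  | C a => rw [← algebraMap_eq, AlgEquiv.commutes]; simp [algebraMap_eq]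
  | add f₁ f₂ h₁ h₂ => simp [h₁, h₂]
  | mul_X f i h => simp [h, pointAct]

theorem pointAct_one (u : σ → F) : pointAct β 1 u = u := by
  ext i; simp [pointAct]

theorem pointAct_mul (g h : G) (u : σ → F) :
    pointAct β (g * h) u = pointAct β h (pointAct β g u) := by
  ext i; simp [pointAct, eval_pointAct]

theorem exists_eq_pointAct_of_eval_eq [Fintype G] {u v : σ → F}
    (huv : ∀ f : MvPolynomial σ F, (∀ g, β g f = f) → eval u f = eval v f) :
    ∃ g, v = pointAct β g u := by
  classical
  by_contra! hv
  obtain ⟨h, hv0, hu1⟩ := exists_eval_eq_zero_and_eval_eq_one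
    (Finset.univ.image fun g => pointAct β g u) (y := v) (by simpa [eq_comm] using hv)
  have hinv : ∀ g', β g' (∏ g, β g h) = ∏ g, β g h := fun g' => by
    simp only [map_prod, ← AlgEquiv.mul_apply, ← map_mul]
    exact Equiv.prod_comp (Equiv.mulLeft g') fun g => β g h
  have := huv _ hinv
  simp only [map_prod, ← eval_pointAct] at this
  rw [Finset.prod_eq_one fun g _ => hu1 _ (by simp),
    Finset.prod_eq_zero (Finset.mem_univ 1) (by rwa [pointAct_one])] at this
  exact one_ne_zero this

end MvPolynomial


namespace DihedralRep

open DihedralGroup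

section Points

variable {F : Type*} [Field F] {ι ι' κ α : Type*}

def rotate (ζ : F) (w : ι → ℕ) (u : (ι ⊕ ι) ⊕ (κ ⊕ κ) → F) : (ι ⊕ ι) ⊕ (κ ⊕ κ) → F
  | .inl (.inl i) => ζ ^ w i * u (.inl (.inl i))
  | .inl (.inr i) => (ζ ^ w i)⁻¹ * u (.inl (.inr i))
  | .inr j => u (.inr j)

def reflect (u : (ι ⊕ ι) ⊕ (κ ⊕ κ) → α) : (ι ⊕ ι) ⊕ (κ ⊕ κ) → α :=
  u ∘ Sum.map Sum.swap Sum.swap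

def restrict (f : ι' → ι) (u : (ι ⊕ ι) ⊕ (κ ⊕ κ) → α) : (ι' ⊕ ι') ⊕ (κ ⊕ κ) → α :=
  u ∘ Sum.map (Sum.map f f) id

theorem rotate_one (w : ι → ℕ) (u : (ι ⊕ ι) ⊕ (κ ⊕ κ) → F) : rotate 1 w u = u := by
  ext ((i | i) | j) <;> simp [rotate]

theorem rotate_rotate (ζ η : F) (w : ι → ℕ) (u : (ι ⊕ ι) ⊕ (κ ⊕ κ) → F) :
    rotate ζ w (rotate η w u) = rotate (η * ζ) w u := by
  ext ((i | i) | j) <;> simp [rotate, mul_pow] <;> ring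

theorem restrict_rotate (ζ : F) (w : ι → ℕ) (f : ι' → ι) (u : (ι ⊕ ι) ⊕ (κ ⊕ κ) → F) :
    restrict f (rotate ζ w u) = rotate ζ (w ∘ f) (restrict f u) := by
  ext ((i | i) | j) <;> rfl

theorem restrict_reflect (f : ι' → ι) (u : (ι ⊕ ι) ⊕ (κ ⊕ κ) → α) :
    restrict f (reflect u) = reflect (restrict f u) := by
  ext ((i | i) | (j | j)) <;> rfl

end Points

section Action

variable {F : Type*} [Field F] {ι ι' κ : Type*} {p : ℕ} {lam : F} {w : ι → ℕ}
  {β : DihedralGroup p →* (MvPolynomial ((ι ⊕ ι) ⊕ (κ ⊕ κ)) F ≃ₐ[F]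
    MvPolynomial ((ι ⊕ ι) ⊕ (κ ⊕ κ)) F)}

theorem pointAct_r_one_eq_rotate
    (hx : ∀ i, β (r 1) (X (.inl (.inl i))) = C (lam ^ w i) * X (.inl (.inl i)))
    (hy : ∀ i, β (r 1) (X (.inl (.inr i))) = C (lam⁻¹ ^ w i) * X (.inl (.inr i)))
    (hz : ∀ j, β (r 1) (X (.inr (.inl j))) = X (.inr (.inl j)))
    (hw : ∀ j, β (r 1) (X (.inr (.inr j))) = X (.inr (.inr j))) (u : (ι ⊕ ι) ⊕ (κ ⊕ κ) → F) :
    pointAct β (r 1) u = rotate lam w u := by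
  ext ((i | i) | (j | j)) <;> simp [pointAct, rotate, hx, hy, hz, hw]

theorem pointAct_sr_zero_eq_reflect
    (hx : ∀ i, β (sr 0) (X (.inl (.inl i))) = X (.inl (.inr i)))
    (hy : ∀ i, β (sr 0) (X (.inl (.inr i))) = X (.inl (.inl i)))
    (hz : ∀ j, β (sr 0) (X (.inr (.inl j))) = X (.inr (.inr j)))
    (hw : ∀ j, β (sr 0) (X (.inr (.inr j))) = X (.inr (.inl j))) (u : (ι ⊕ ι) ⊕ (κ ⊕ κ) → F) :
    pointAct β (sr 0) u = reflect u := by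
  ext ((i | i) | (j | j)) <;> simp [pointAct, reflect, hx, hy, hz, hw]

theorem pointAct_r (hr : ∀ u, pointAct β (r 1) u = rotate lam w u) (k : ℕ)
    (u : (ι ⊕ ι) ⊕ (κ ⊕ κ) → F) : pointAct β (r k) u = rotate (lam ^ k) w u := by
  induction k with
  | zero => simp [← one_def, pointAct_one, rotate_one]
  | succ k ih => rw [Nat.cast_succ, ← r_mul_r, pointAct_mul, ih, hr, rotate_rotate, pow_succ]

theorem pointAct_sr (hr : ∀ u, pointAct β (r 1) u = rotate lam w u)
    (hs : ∀ u, pointAct β (sr 0) u = reflect u) (k : ℕ) (u : (ι ⊕ ι) ⊕ (κ ⊕ κ) → F) :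
    pointAct β (sr k) u = rotate (lam ^ k) w (reflect u) := by
  rw [← zero_add (k : ZMod p), ← sr_mul_r, pointAct_mul, hs, pointAct_r hr]

theorem exists_eq_pointAct [NeZero p] (hlam : IsPrimitiveRoot lam p)
    (hr : ∀ u, pointAct β (r 1) u = rotate lam w u) (hs : ∀ u, pointAct β (sr 0) u = reflect u)
    {u v : (ι ⊕ ι) ⊕ (κ ⊕ κ) → F}
    (huv : ∃ ζ : F, ζ ^ p = 1 ∧ (v = rotate ζ w u ∨ v = rotate ζ w (reflect u))) :
    ∃ g, v = pointAct β g u := by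
  obtain ⟨ζ, hζ, huv⟩ := huv
  obtain ⟨k, -, rfl⟩ := hlam.eq_pow_of_pow_eq_one hζ
  rcases huv with rfl | rfl
  exacts [⟨r k, (pointAct_r hr k u).symm⟩, ⟨sr k, (pointAct_sr hr hs k u).symm⟩]

theorem restrict_pointAct [NeZero p] (f : ι' → ι)
    {β' : DihedralGroup p →* (MvPolynomial ((ι' ⊕ ι') ⊕ (κ ⊕ κ)) F ≃ₐ[F]
      MvPolynomial ((ι' ⊕ ι') ⊕ (κ ⊕ κ)) F)}
    (hr : ∀ u, pointAct β (r 1) u = rotate lam w u) (hs : ∀ u, pointAct β (sr 0) u = reflect u)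
    (hr' : ∀ u, pointAct β' (r 1) u = rotate lam (w ∘ f) u)
    (hs' : ∀ u, pointAct β' (sr 0) u = reflect u) (g : DihedralGroup p)
    (u : (ι ⊕ ι) ⊕ (κ ⊕ κ) → F) :
    restrict f (pointAct β g u) = pointAct β' g (restrict f u) := by
  cases g with
  | r k => rw [← ZMod.natCast_zmod_val k, pointAct_r hr, pointAct_r hr', restrict_rotate]
  | sr k =>
    rw [← ZMod.natCast_zmod_val k, pointAct_sr hr hs, pointAct_sr hr' hs', restrict_rotate,
      restrict_reflect]

end Action

section LastPair

variable {F : Type*} [Field F] {ι κ : Type*} {p : ℕ} {n : ι → ℕ} {a b : ι → F}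

theorem pow_eq_pow_of_pow_eq_mul (hnp : ∀ i, n i ≤ p) {γ : F} (i : ι)
    (hb : b i ^ n i = γ * a i ^ n i) (ha : a i ^ (p - n i) = γ * b i ^ (p - n i)) :
    b i ^ p = a i ^ p := by
  rw [← Nat.add_sub_cancel' (hnp i), pow_add, pow_add, hb, ha]
  ring

theorem eq_zero_or_reflection_of_rotation (hnp : ∀ i, n i < p) {c d : κ → F} {ζ A B : F}
    (hζ0 : ζ ≠ 0) (hAB : ¬(A = 0 ∧ B = 0)) (hf : ∀ i, ζ * (A * b i ^ n i) = B * a i ^ n i)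
    (hg : ∀ i, ζ * (A * a i ^ (p - n i)) = B * b i ^ (p - n i))
    (hfz : ∀ i j, ζ * (A * b i ^ n i * c j) = B * a i ^ n i * d j) :
    (∀ i, a i = 0 ∧ b i = 0) ∨
      ∃ γ : F, γ ^ p = 1 ∧ ζ * A = γ⁻¹ * B ∧ ζ⁻¹ * B = γ * A ∧
        (∀ i, b i ^ p = a i ^ p ∧ b i ^ n i = γ * a i ^ n i) ∧ ∀ j, c j = d j := by
  by_cases h0 : ∀ i, a i = 0 ∧ b i = 0
  · exact Or.inl h0
  push Not at h0
  obtain ⟨i₀, hi₀⟩ := h0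
  have hp : p ≠ 0 := Nat.ne_zero_of_lt (hnp i₀)
  have hpn : p - n i₀ ≠ 0 := Nat.sub_ne_zero_of_lt (hnp i₀)
  have hA : A ≠ 0 := by
    rintro rfl
    have hB : B ≠ 0 := fun h => hAB ⟨rfl, h⟩
    have := hf i₀
    have := hg i₀
    simp_all
  have hB : B ≠ 0 := by
    rintro rfl
    have := hf i₀
    have := hg i₀
    simp_all
  have hγn : ∀ i, b i ^ n i = ζ⁻¹ * B * A⁻¹ * a i ^ n i := fun i => by
    field_simp
    linear_combination hf i
  have hbp : ∀ i, b i ^ p = a i ^ p := fun i =>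
    pow_eq_pow_of_pow_eq_mul (fun i => (hnp i).le) i (hγn i)
      (by field_simp; linear_combination hg i)
  have ha₀ : a i₀ ≠ 0 := fun h => hi₀ h (by simpa [h, hp] using hbp i₀)
  refine Or.inr ⟨ζ⁻¹ * B * A⁻¹, ?_, by field_simp, by field_simp, fun i => ⟨hbp i, hγn i⟩,
    fun j => ?_⟩
  · have : (ζ⁻¹ * B * A⁻¹) ^ p * (a i₀ ^ n i₀) ^ p = 1 * (a i₀ ^ n i₀) ^ p := by
      rw [← mul_pow, ← hγn, one_mul, ← pow_mul, ← pow_mul, mul_comm, pow_mul, pow_mul, hbp]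
    exact mul_right_cancel₀ (pow_ne_zero _ (pow_ne_zero _ ha₀)) this
  · have : B * a i₀ ^ n i₀ * c j = B * a i₀ ^ n i₀ * d j := by
      linear_combination hfz i₀ j - c j * hf i₀
    exact mul_left_cancel₀ (mul_ne_zero hB (pow_ne_zero _ ha₀)) this

theorem pow_eq_pow_and_pow_eq_mul_of_reflection (hnp : ∀ i, n i ≤ p) {γ A B : F} (hγ0 : γ ≠ 0)
    (hAB : A ≠ γ⁻¹ * B)
    (hf : ∀ i, A * b i ^ n i + B * a i ^ n i = γ⁻¹ * B * b i ^ n i + γ * A * a i ^ n i)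
    (hg : ∀ i, A * a i ^ (p - n i) + B * b i ^ (p - n i) =
      γ⁻¹ * B * a i ^ (p - n i) + γ * A * b i ^ (p - n i)) (i : ι) :
    b i ^ p = a i ^ p ∧ b i ^ n i = γ * a i ^ n i := by
  have hb := eq_mul_of_add_eq_inv_mul_add_mul hγ0 hAB (hf i)
  have ha := eq_mul_of_add_eq_inv_mul_add_mul hγ0 hAB (hg i)
  exact ⟨pow_eq_pow_of_pow_eq_mul hnp i hb ha, hb⟩

theorem eq_or_rotation_or_reflection (hp : p ≠ 0) (hnp : ∀ i, n i < p) {c d : κ → F}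
    {A B A' B' : F} (hxy : A * B = A' * B') (hpow : A ^ p + B ^ p = A' ^ p + B' ^ p)
    (hf : ∀ i, A * b i ^ n i + B * a i ^ n i = A' * b i ^ n i + B' * a i ^ n i)
    (hg : ∀ i, A * a i ^ (p - n i) + B * b i ^ (p - n i) =
      A' * a i ^ (p - n i) + B' * b i ^ (p - n i))
    (hfz : ∀ i j, A * b i ^ n i * c j + B * a i ^ n i * d j =
      A' * b i ^ n i * c j + B' * a i ^ n i * d j)
    (hh : ∀ j, A ^ p * c j + B ^ p * d j = A' ^ p * c j + B' ^ p * d j) :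
    (A' = A ∧ B' = B) ∨
      (∃ ζ : F, ζ ^ p = 1 ∧ A' = ζ * A ∧ B' = ζ⁻¹ * B ∧ ∀ i, a i = 0 ∧ b i = 0) ∨
      ∃ γ : F, γ ^ p = 1 ∧ A' = γ⁻¹ * B ∧ B' = γ * A ∧
        (∀ i, b i ^ p = a i ^ p ∧ b i ^ n i = γ * a i ^ n i) ∧ ∀ j, c j = d j := by
  have ne_zero_of_pow_eq_one : ∀ ζ : F, ζ ^ p = 1 → ζ ≠ 0 := by
    rintro ζ hζ rfl
    simp [hp] at hζ
  by_cases hI : A' ^ p = A ^ p ∧ B' ^ p = B ^ p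
  · obtain ⟨ζ, hζ, rfl, rfl⟩ := exists_pow_eq_one_of_mul_eq_mul hp hxy hI.1 hI.2
    by_cases hζ1 : ζ = 1
    · exact Or.inl (by simp [hζ1])
    by_cases hAB : A = 0 ∧ B = 0
    · exact Or.inl (by simp [hAB])
    have hζ0 := ne_zero_of_pow_eq_one ζ hζ
    have hf' : ∀ i, ζ * (A * b i ^ n i) = B * a i ^ n i := fun i =>
      mul_eq_of_add_eq_mul_add_inv_mul hζ0 hζ1 (by linear_combination hf i)
    have hg' : ∀ i, ζ * (A * a i ^ (p - n i)) = B * b i ^ (p - n i) := fun i =>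
      mul_eq_of_add_eq_mul_add_inv_mul hζ0 hζ1 (by linear_combination hg i)
    have hfz' : ∀ i j, ζ * (A * b i ^ n i * c j) = B * a i ^ n i * d j := fun i j =>
      mul_eq_of_add_eq_mul_add_inv_mul hζ0 hζ1 (by linear_combination hfz i j)
    rcases eq_zero_or_reflection_of_rotation hnp hζ0 hAB hf' hg' hfz' with h0 | hγ
    exacts [Or.inr (Or.inl ⟨ζ, hζ, rfl, rfl, h0⟩), Or.inr (Or.inr hγ)]
  obtain ⟨hA, hB⟩ := (eq_and_eq_or_eq_and_eq_of_add_eq_of_mul_eq hpow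
    (by rw [← mul_pow, ← mul_pow, hxy])).resolve_left hI
  have hApB : A ^ p ≠ B ^ p := fun h => hI ⟨hA.trans h.symm, hB.trans h⟩
  obtain ⟨γ, hγ, rfl, rfl⟩ := exists_pow_eq_one_of_mul_eq_mul hp (hxy.trans (mul_comm _ _)) hB hA
  have hγ0 := ne_zero_of_pow_eq_one γ hγ
  have hAB : A ≠ γ⁻¹ * B := fun h => hApB (by rw [h, mul_pow, inv_pow, hγ, inv_one, one_mul])
  refine Or.inr (Or.inr ⟨γ, hγ, rfl, rfl,
    pow_eq_pow_and_pow_eq_mul_of_reflection (fun i => (hnp i).le) hγ0 hAB hf hg, fun j => ?_⟩)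
  have : (A ^ p - B ^ p) * (c j - d j) = 0 := by
    linear_combination hh j + c j * hA + d j * hB
  exact sub_eq_zero.mp ((mul_eq_zero.mp this).resolve_left (sub_ne_zero.mpr hApB))

end LastPair

/-- Indices of the set `T`: `x_r y_r`, `x_r^p + y_r^p`, `f_i`, `g_i`, `f_{i,j}` and `h_j`. -/
inductive TIndex (r s : ℕ) : Type
  | xy
  | powSum
  | f (i : Fin r)
  | g (i : Fin r)
  | fz (i : Fin r) (j : Fin s)
  | h (j : Fin s)

section Invariants

variable {F : Type*} [Field F] {r' s p : ℕ} {lam : F} {m : Fin (r' + 1) → ℕ} {n : Fin r' → ℕ}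
  {u v : (Fin (r' + 1) ⊕ Fin (r' + 1)) ⊕ (Fin s ⊕ Fin s) → F}

noncomputable def tPoly (p : ℕ) (n : Fin r' → ℕ) :
    TIndex r' s → MvPolynomial ((Fin (r' + 1) ⊕ Fin (r' + 1)) ⊕ (Fin s ⊕ Fin s)) F
  | .xy => X (.inl (.inl (Fin.last r'))) * X (.inl (.inr (Fin.last r')))
  | .powSum => X (.inl (.inl (Fin.last r'))) ^ p + X (.inl (.inr (Fin.last r'))) ^ p
  | .f i => X (.inl (.inl (Fin.last r'))) * X (.inl (.inr i.castSucc)) ^ n i +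
      X (.inl (.inr (Fin.last r'))) * X (.inl (.inl i.castSucc)) ^ n i
  | .g i => X (.inl (.inl (Fin.last r'))) * X (.inl (.inl i.castSucc)) ^ (p - n i) +
      X (.inl (.inr (Fin.last r'))) * X (.inl (.inr i.castSucc)) ^ (p - n i)
  | .fz i j =>
      X (.inl (.inl (Fin.last r'))) * X (.inl (.inr i.castSucc)) ^ n i * X (.inr (.inl j)) +
      X (.inl (.inr (Fin.last r'))) * X (.inl (.inl i.castSucc)) ^ n i * X (.inr (.inr j))
  | .h j => X (.inl (.inl (Fin.last r'))) ^ p * X (.inr (.inl j)) +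
      X (.inl (.inr (Fin.last r'))) ^ p * X (.inr (.inr j))

theorem eval_tPoly_reflect (t : TIndex r' s) :
    eval (reflect u) (tPoly p n t) = eval u (tPoly p n t) := by
  cases t <;> simp [tPoly, reflect] <;> ring

theorem eval_tPoly_rotate [NeZero p] {ζ : F} (hζ : ζ ^ p = 1) (hnp : ∀ i, n i ≤ p)
    (hnm : ∀ i, n i * m i.castSucc ≡ m (Fin.last r') [MOD p]) (t : TIndex r' s) :
    eval (rotate ζ m u) (tPoly p n t) = eval u (tPoly p n t) := by
  have hE : ζ ^ m (Fin.last r') ≠ 0 := by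
    refine pow_ne_zero _ ?_
    rintro rfl
    exact zero_ne_one ((zero_pow (NeZero.ne p)).symm.trans hζ)
  have hEp : (ζ ^ m (Fin.last r')) ^ p = 1 := by rw [← pow_mul, mul_comm, pow_mul, hζ, one_pow]
  have hεn : ∀ i, (ζ ^ m i.castSucc) ^ n i = ζ ^ m (Fin.last r') := fun i =>
    pow_pow_eq_of_modEq hζ (hnm i)
  have hεpn : ∀ i, (ζ ^ m i.castSucc) ^ (p - n i) = (ζ ^ m (Fin.last r'))⁻¹ := fun i => by
    refine eq_inv_of_mul_eq_one_left ?_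
    rw [← hεn, ← pow_add, Nat.sub_add_cancel (hnp i), ← pow_mul, mul_comm, pow_mul, hζ, one_pow]
  cases t <;> simp [tPoly, rotate, mul_pow, inv_pow, hεn, hεpn, hEp] <;> field_simp

theorem eval_tPoly_pointAct [NeZero p] (hlam : IsPrimitiveRoot lam p)
    {α : DihedralGroup p →* (MvPolynomial ((Fin (r' + 1) ⊕ Fin (r' + 1)) ⊕ (Fin s ⊕ Fin s)) F ≃ₐ[F]
      MvPolynomial ((Fin (r' + 1) ⊕ Fin (r' + 1)) ⊕ (Fin s ⊕ Fin s)) F)}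
    (hr : ∀ u, pointAct α (r 1) u = rotate lam m u) (hs : ∀ u, pointAct α (sr 0) u = reflect u)
    (hnp : ∀ i, n i ≤ p) (hnm : ∀ i, n i * m i.castSucc ≡ m (Fin.last r') [MOD p])
    (g : DihedralGroup p) (t : TIndex r' s) :
    eval (pointAct α g u) (tPoly p n t) = eval u (tPoly p n t) := by
  have hk : ∀ k : ℕ, (lam ^ k) ^ p = 1 := fun k => by
    rw [← pow_mul, mul_comm, pow_mul, hlam.pow_eq_one, one_pow]
  cases g with
  | r k => rw [← ZMod.natCast_zmod_val k, pointAct_r hr, eval_tPoly_rotate (hk _) hnp hnm]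
  | sr k =>
    rw [← ZMod.natCast_zmod_val k, pointAct_sr hr hs, eval_tPoly_rotate (hk _) hnp hnm,
      eval_tPoly_reflect]

theorem eq_of_restrict_eq {α : Type*} {u v : (Fin (r' + 1) ⊕ Fin (r' + 1)) ⊕ (Fin s ⊕ Fin s) → α}
    (hπ : restrict Fin.castSucc v = restrict Fin.castSucc u)
    (hx : v (.inl (.inl (Fin.last r'))) = u (.inl (.inl (Fin.last r'))))
    (hy : v (.inl (.inr (Fin.last r'))) = u (.inl (.inr (Fin.last r')))) : v = u := by
  ext ((i | i) | j)
  · induction i using Fin.lastCases with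
    | last => exact hx
    | cast i => exact congrFun hπ (.inl (.inl i))
  · induction i using Fin.lastCases with
    | last => exact hy
    | cast i => exact congrFun hπ (.inl (.inr i))
  · exact congrFun hπ (.inr j)

theorem exists_rotate_eq [NeZero p] (hlam : IsPrimitiveRoot lam p)
    (hM : (m (Fin.last r')).Coprime p) (hπ : restrict Fin.castSucc v = restrict Fin.castSucc u)
    {ζ : F} (hζ : ζ ^ p = 1)
    (hx : v (.inl (.inl (Fin.last r'))) = ζ * u (.inl (.inl (Fin.last r'))))
    (hy : v (.inl (.inr (Fin.last r'))) = ζ⁻¹ * u (.inl (.inr (Fin.last r'))))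
    (h0 : ∀ i : Fin r', u (.inl (.inl i.castSucc)) = 0 ∧ u (.inl (.inr i.castSucc)) = 0) :
    ∃ η : F, η ^ p = 1 ∧ v = rotate η m u := by
  obtain ⟨η, hη, rfl⟩ := hlam.exists_pow_eq_one_and_pow_eq hM hζ
  refine ⟨η, hη, funext ?_⟩
  rintro ((i | i) | j)
  · induction i using Fin.lastCases with
    | last => exact hx
    | cast i => simpa [rotate, restrict, (h0 i).1] using congrFun hπ (.inl (.inl i))
  · induction i using Fin.lastCases with
    | last => exact hy
    | cast i => simpa [rotate, restrict, (h0 i).2] using congrFun hπ (.inl (.inr i))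
  · exact congrFun hπ (.inr j)

theorem exists_rotate_reflect_eq (hp : p.Prime) (hlam : IsPrimitiveRoot lam p)
    (hM : (m (Fin.last r')).Coprime p) (hn : ∀ i, n i ≠ 0 ∧ n i < p)
    (hnm : ∀ i, n i * m i.castSucc ≡ m (Fin.last r') [MOD p])
    (hπ : restrict Fin.castSucc v = restrict Fin.castSucc u) {γ : F} (hγ : γ ^ p = 1)
    (hx : v (.inl (.inl (Fin.last r'))) = γ⁻¹ * u (.inl (.inr (Fin.last r'))))
    (hy : v (.inl (.inr (Fin.last r'))) = γ * u (.inl (.inl (Fin.last r'))))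
    (hab : ∀ i : Fin r', u (.inl (.inr i.castSucc)) ^ p = u (.inl (.inl i.castSucc)) ^ p ∧
      u (.inl (.inr i.castSucc)) ^ n i = γ * u (.inl (.inl i.castSucc)) ^ n i)
    (hcd : ∀ j, u (.inr (.inl j)) = u (.inr (.inr j))) :
    ∃ η : F, η ^ p = 1 ∧ v = rotate η m (reflect u) := by
  have : NeZero p := ⟨hp.ne_zero⟩
  have hγ0 : γ ≠ 0 := by rintro rfl; simp [hp.ne_zero] at hγ
  obtain ⟨η, hη, hηγ⟩ := hlam.exists_pow_eq_one_and_pow_eq hM (ζ := γ⁻¹)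
    (by rw [inv_pow, hγ, inv_one])
  have hη0 : η ≠ 0 := by rintro rfl; simp [hp.ne_zero] at hη
  have hηp : ∀ k, (η ^ k) ^ p = 1 := fun k => by rw [← pow_mul, mul_comm, pow_mul, hη, one_pow]
  have hxi : ∀ i : Fin r',
      η ^ m i.castSucc * u (.inl (.inr i.castSucc)) = u (.inl (.inl i.castSucc)) := fun i =>
    eq_of_pow_eq_of_pow_eq_of_coprime hp.ne_zero (Nat.coprime_of_lt_prime (hn i).1 (hn i).2 hp)
      (by rw [mul_pow, hηp, one_mul, (hab i).1])
      (by rw [mul_pow, pow_pow_eq_of_modEq hη (hnm i), hηγ, (hab i).2, ← mul_assoc,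
        inv_mul_cancel₀ hγ0, one_mul])
  refine ⟨η, hη, funext ?_⟩
  rintro ((i | i) | (j | j))
  · induction i using Fin.lastCases with
    | last => simp [rotate, reflect, hηγ, hx]
    | cast i => simpa [rotate, reflect, restrict, hxi i] using congrFun hπ (.inl (.inl i))
  · induction i using Fin.lastCases with
    | last => simp [rotate, reflect, hηγ, hy]
    | cast i =>
      simp only [rotate, reflect, Function.comp_apply, Sum.map_inl, Sum.swap_inr]
      rw [← hxi i, ← mul_assoc, inv_mul_cancel₀ (pow_ne_zero _ hη0), one_mul]
      exact congrFun hπ (.inl (.inr i))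
  · exact (congrFun hπ (.inr (.inl j))).trans (hcd j)
  · exact (congrFun hπ (.inr (.inr j))).trans (hcd j).symm

theorem exists_rotate_eq_or_rotate_reflect_eq (hp : p.Prime) (hlam : IsPrimitiveRoot lam p)
    (hM : (m (Fin.last r')).Coprime p) (hn : ∀ i, n i ≠ 0 ∧ n i < p)
    (hnm : ∀ i, n i * m i.castSucc ≡ m (Fin.last r') [MOD p])
    (hπ : restrict Fin.castSucc v = restrict Fin.castSucc u)
    (hT : ∀ t, eval u (tPoly p n t) = eval v (tPoly p n t)) :
    ∃ η : F, η ^ p = 1 ∧ (v = rotate η m u ∨ v = rotate η m (reflect u)) := by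
  have : NeZero p := ⟨hp.ne_zero⟩
  have hx : ∀ i : Fin r', v (.inl (.inl i.castSucc)) = u (.inl (.inl i.castSucc)) :=
    fun i => congrFun hπ (.inl (.inl i))
  have hy : ∀ i : Fin r', v (.inl (.inr i.castSucc)) = u (.inl (.inr i.castSucc)) :=
    fun i => congrFun hπ (.inl (.inr i))
  have hz : ∀ j, v (.inr j) = u (.inr j) := fun j => congrFun hπ (.inr j)
  have hxy := hT .xy
  have hpow := hT .powSum
  have hf := fun i => hT (.f i)
  have hg := fun i => hT (.g i)
  have hfz := fun i j => hT (.fz i j)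
  have hh := fun j => hT (.h j)
  simp only [tPoly, eval_mul, eval_add, eval_pow, eval_X, hx, hy, hz] at hxy hpow hf hg hfz hh
  rcases eq_or_rotation_or_reflection hp.ne_zero (fun i => (hn i).2) hxy hpow hf hg hfz hh with
    ⟨hA, hB⟩ | ⟨ζ, hζ, hA, hB, h0⟩ | ⟨γ, hγ, hA, hB, hab, hcd⟩
  · exact ⟨1, one_pow p, Or.inl (by rw [rotate_one]; exact eq_of_restrict_eq hπ hA hB)⟩
  · obtain ⟨η, hη, h⟩ := exists_rotate_eq hlam hM hπ hζ hA hB h0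
    exact ⟨η, hη, Or.inl h⟩
  · obtain ⟨η, hη, h⟩ := exists_rotate_reflect_eq hp hlam hM hn hnm hπ hγ hA hB hab hcd
    exact ⟨η, hη, Or.inr h⟩

end Invariants

end DihedralRep

open DihedralRep

theorem separating_set_extension_general
    (p : ℕ) (hp_prime : p.Prime)
    (F : Type*) [Field F]
    (lam : F) (hlam : IsPrimitiveRoot lam p)
    (r' s : ℕ) (m : Fin (r' + 1) → ℕ) (hm : ∀ i, 0 < m i ∧ m i ≤ (p - 1) / 2)
    (n : Fin r' → ℕ)
    (hn : ∀ i : Fin r', 1 ≤ n i ∧ n i ≤ p - 1 ∧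
      ((n i * m i.castSucc : ℕ) : ZMod p) = ((m (Fin.last r') : ℕ) : ZMod p))
    -- the action on F[V]
    (α : DihedralGroup p →*
      (MvPolynomial ((Fin (r' + 1) ⊕ Fin (r' + 1)) ⊕ (Fin s ⊕ Fin s)) F ≃ₐ[F]
       MvPolynomial ((Fin (r' + 1) ⊕ Fin (r' + 1)) ⊕ (Fin s ⊕ Fin s)) F))
    (hρx : ∀ i : Fin (r' + 1), α (DihedralGroup.r 1) (X (Sum.inl (Sum.inl i))) =
      C (lam ^ m i) * X (Sum.inl (Sum.inl i)))
    (hρy : ∀ i : Fin (r' + 1), α (DihedralGroup.r 1) (X (Sum.inl (Sum.inr i))) =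
      C (lam⁻¹ ^ m i) * X (Sum.inl (Sum.inr i)))
    (hρz : ∀ j : Fin s, α (DihedralGroup.r 1) (X (Sum.inr (Sum.inl j))) =
      X (Sum.inr (Sum.inl j)))
    (hρw : ∀ j : Fin s, α (DihedralGroup.r 1) (X (Sum.inr (Sum.inr j))) =
      X (Sum.inr (Sum.inr j)))
    (hσx : ∀ i : Fin (r' + 1), α (DihedralGroup.sr 0) (X (Sum.inl (Sum.inl i))) =
      X (Sum.inl (Sum.inr i)))
    (hσy : ∀ i : Fin (r' + 1), α (DihedralGroup.sr 0) (X (Sum.inl (Sum.inr i))) =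
      X (Sum.inl (Sum.inl i)))
    (hσz : ∀ j : Fin s, α (DihedralGroup.sr 0) (X (Sum.inr (Sum.inl j))) =
      X (Sum.inr (Sum.inr j)))
    (hσw : ∀ j : Fin s, α (DihedralGroup.sr 0) (X (Sum.inr (Sum.inr j))) =
      X (Sum.inr (Sum.inl j)))
    -- the action on F[V']
    (α' : DihedralGroup p →*
      (MvPolynomial ((Fin r' ⊕ Fin r') ⊕ (Fin s ⊕ Fin s)) F ≃ₐ[F]
       MvPolynomial ((Fin r' ⊕ Fin r') ⊕ (Fin s ⊕ Fin s)) F))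
    (hρx' : ∀ i : Fin r', α' (DihedralGroup.r 1) (X (Sum.inl (Sum.inl i))) =
      C (lam ^ m i.castSucc) * X (Sum.inl (Sum.inl i)))
    (hρy' : ∀ i : Fin r', α' (DihedralGroup.r 1) (X (Sum.inl (Sum.inr i))) =
      C (lam⁻¹ ^ m i.castSucc) * X (Sum.inl (Sum.inr i)))
    (hρz' : ∀ j : Fin s, α' (DihedralGroup.r 1) (X (Sum.inr (Sum.inl j))) =
      X (Sum.inr (Sum.inl j)))
    (hρw' : ∀ j : Fin s, α' (DihedralGroup.r 1) (X (Sum.inr (Sum.inr j))) =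
      X (Sum.inr (Sum.inr j)))
    (hσx' : ∀ i : Fin r', α' (DihedralGroup.sr 0) (X (Sum.inl (Sum.inl i))) =
      X (Sum.inl (Sum.inr i)))
    (hσy' : ∀ i : Fin r', α' (DihedralGroup.sr 0) (X (Sum.inl (Sum.inr i))) =
      X (Sum.inl (Sum.inl i)))
    (hσz' : ∀ j : Fin s, α' (DihedralGroup.sr 0) (X (Sum.inr (Sum.inl j))) =
      X (Sum.inr (Sum.inr j)))
    (hσw' : ∀ j : Fin s, α' (DihedralGroup.sr 0) (X (Sum.inr (Sum.inr j))) =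
      X (Sum.inr (Sum.inl j)))
    -- S is a set of invariants of F[V'] which is separating for V'
    (S : Set (MvPolynomial ((Fin r' ⊕ Fin r') ⊕ (Fin s ⊕ Fin s)) F))
    (hS_sep : ∀ u' v' : ((Fin r' ⊕ Fin r') ⊕ (Fin s ⊕ Fin s)) → F,
      (∀ f ∈ S, eval u' f = eval v' f) →
      ∀ f : MvPolynomial ((Fin r' ⊕ Fin r') ⊕ (Fin s ⊕ Fin s)) F,
        (∀ g : DihedralGroup p, α' g f = f) → eval u' f = eval v' f) :
    -- then S ∪ T is separating for V
    ∀ u v : ((Fin (r' + 1) ⊕ Fin (r' + 1)) ⊕ (Fin s ⊕ Fin s)) → F,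
      (∀ f ∈ S,
        eval u (rename (Sum.map (Sum.map Fin.castSucc Fin.castSucc) id) f) =
        eval v (rename (Sum.map (Sum.map Fin.castSucc Fin.castSucc) id) f)) →
      (eval u (X (Sum.inl (Sum.inl (Fin.last r'))) * X (Sum.inl (Sum.inr (Fin.last r')))
          : MvPolynomial ((Fin (r' + 1) ⊕ Fin (r' + 1)) ⊕ (Fin s ⊕ Fin s)) F) =
       eval v (X (Sum.inl (Sum.inl (Fin.last r'))) * X (Sum.inl (Sum.inr (Fin.last r'))))) →
      (eval u (X (Sum.inl (Sum.inl (Fin.last r'))) ^ p + X (Sum.inl (Sum.inr (Fin.last r'))) ^ p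
          : MvPolynomial ((Fin (r' + 1) ⊕ Fin (r' + 1)) ⊕ (Fin s ⊕ Fin s)) F) =
       eval v (X (Sum.inl (Sum.inl (Fin.last r'))) ^ p + X (Sum.inl (Sum.inr (Fin.last r'))) ^ p)) →
      (∀ i : Fin r',
        eval u (X (Sum.inl (Sum.inl (Fin.last r'))) * X (Sum.inl (Sum.inr i.castSucc)) ^ n i +
                X (Sum.inl (Sum.inr (Fin.last r'))) * X (Sum.inl (Sum.inl i.castSucc)) ^ n i
            : MvPolynomial ((Fin (r' + 1) ⊕ Fin (r' + 1)) ⊕ (Fin s ⊕ Fin s)) F) =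
        eval v (X (Sum.inl (Sum.inl (Fin.last r'))) * X (Sum.inl (Sum.inr i.castSucc)) ^ n i +
                X (Sum.inl (Sum.inr (Fin.last r'))) * X (Sum.inl (Sum.inl i.castSucc)) ^ n i)) →
      (∀ i : Fin r',
        eval u (X (Sum.inl (Sum.inl (Fin.last r'))) * X (Sum.inl (Sum.inl i.castSucc)) ^ (p - n i) +
                X (Sum.inl (Sum.inr (Fin.last r'))) * X (Sum.inl (Sum.inr i.castSucc)) ^ (p - n i)
            : MvPolynomial ((Fin (r' + 1) ⊕ Fin (r' + 1)) ⊕ (Fin s ⊕ Fin s)) F) =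
        eval v (X (Sum.inl (Sum.inl (Fin.last r'))) * X (Sum.inl (Sum.inl i.castSucc)) ^ (p - n i) +
                X (Sum.inl (Sum.inr (Fin.last r'))) * X (Sum.inl (Sum.inr i.castSucc)) ^ (p - n i))) →
      (∀ (i : Fin r') (j : Fin s),
        eval u (X (Sum.inl (Sum.inl (Fin.last r'))) * X (Sum.inl (Sum.inr i.castSucc)) ^ n i *
                  X (Sum.inr (Sum.inl j)) +
                X (Sum.inl (Sum.inr (Fin.last r'))) * X (Sum.inl (Sum.inl i.castSucc)) ^ n i *
                  X (Sum.inr (Sum.inr j))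
            : MvPolynomial ((Fin (r' + 1) ⊕ Fin (r' + 1)) ⊕ (Fin s ⊕ Fin s)) F) =
        eval v (X (Sum.inl (Sum.inl (Fin.last r'))) * X (Sum.inl (Sum.inr i.castSucc)) ^ n i *
                  X (Sum.inr (Sum.inl j)) +
                X (Sum.inl (Sum.inr (Fin.last r'))) * X (Sum.inl (Sum.inl i.castSucc)) ^ n i *
                  X (Sum.inr (Sum.inr j)))) →
      (∀ j : Fin s,
        eval u (X (Sum.inl (Sum.inl (Fin.last r'))) ^ p * X (Sum.inr (Sum.inl j)) +
                X (Sum.inl (Sum.inr (Fin.last r'))) ^ p * X (Sum.inr (Sum.inr j))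
            : MvPolynomial ((Fin (r' + 1) ⊕ Fin (r' + 1)) ⊕ (Fin s ⊕ Fin s)) F) =
        eval v (X (Sum.inl (Sum.inl (Fin.last r'))) ^ p * X (Sum.inr (Sum.inl j)) +
                X (Sum.inl (Sum.inr (Fin.last r'))) ^ p * X (Sum.inr (Sum.inr j)))) →
      ∀ f : MvPolynomial ((Fin (r' + 1) ⊕ Fin (r' + 1)) ⊕ (Fin s ⊕ Fin s)) F,
        (∀ g : DihedralGroup p, α g f = f) → eval u f = eval v f := by
  intro u v hS h1 h2 h3 h4 h5 h6 f hf
  have : NeZero p := ⟨hp_prime.ne_zero⟩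
  have hr := pointAct_r_one_eq_rotate hρx hρy hρz hρw
  have hs := pointAct_sr_zero_eq_reflect hσx hσy hσz hσw
  have hr' := pointAct_r_one_eq_rotate (w := m ∘ Fin.castSucc) hρx' hρy' hρz' hρw'
  have hs' := pointAct_sr_zero_eq_reflect hσx' hσy' hσz' hσw'
  have hM : (m (Fin.last r')).Coprime p := (Nat.coprime_of_lt_prime (hm _).1.ne'
    (by have := (hm (Fin.last r')).2; have := hp_prime.two_le; omega) hp_prime).symm
  have hn' : ∀ i, n i ≠ 0 ∧ n i < p := fun i => by
    have := hn i; have := hp_prime.two_le; omega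
  have hnm : ∀ i, n i * m i.castSucc ≡ m (Fin.last r') [MOD p] := fun i =>
    (ZMod.natCast_eq_natCast_iff _ _ _).mp (hn i).2.2
  obtain ⟨g, hg⟩ := exists_eq_pointAct_of_eval_eq α' (u := restrict Fin.castSucc u)
    (v := restrict Fin.castSucc v) fun f' hf' =>
      hS_sep _ _ (fun f₀ hf₀ => by simpa only [eval_rename, restrict] using hS f₀ hf₀) f' hf'
  have hπ : restrict Fin.castSucc v = restrict Fin.castSucc (pointAct α g u) := by
    rw [hg, restrict_pointAct _ hr hs hr' hs']
  have hT : ∀ t, eval (pointAct α g u) (tPoly p n t) = eval v (tPoly p n t) := by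
    intro t
    rw [eval_tPoly_pointAct hlam hr hs (fun i => (hn' i).2.le) hnm]
    cases t
    exacts [h1, h2, h3 _, h4 _, h5 _ _, h6 _]
  obtain ⟨g', rfl⟩ := exists_eq_pointAct hlam hr hs
    (exists_rotate_eq_or_rotate_reflect_eq hp_prime hlam hM hn' hnm hπ hT)
  rw [eval_pointAct, hf, eval_pointAct, hf]

/-- Let `p` be an odd prime, `F` algebraically closed of characteristic two,
and let `G = D_{2p}` act on `V = F^{2r+2s}` (`r = r' + 1 ≥ 1`, coordinates
indexed by `(Fin (r'+1) ⊕ Fin (r'+1)) ⊕ (Fin s ⊕ Fin s)`) as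
`⊕ W_{m_i} ⊕ (W_0)^s`, with the induced action `α` on the polynomial ring
`F[V]`, and similarly on `V' = F^{2(r-1)+2s}` (the first `r-1` pairs of
weights) with induced action `α'` on `F[V']`; `F[V']` is identified with a
subalgebra of `F[V]` via `rename` along the evident inclusion of variables.
If `S ⊆ F[V']^G` is a separating set for `V'`, then `S` together with the set
`T = {x_r y_r, x_r^p + y_r^p, f_i, g_i, f_{i,j}, h_j}` (where
`f_i = x_r y_i^{n_i} + y_r x_i^{n_i}`,
`g_i = x_r x_i^{p-n_i} + y_r y_i^{p-n_i}`,
`f_{i,j} = x_r y_i^{n_i} z_j + y_r x_i^{n_i} w_j`,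
`h_j = x_r^p z_j + y_r^p w_j`, and `n_i` is the unique integer with
`1 ≤ n_i ≤ p-1`, `n_i m_i ≡ m_r (mod p)`) is a separating set for `V`. -/
theorem separating_set_extension
    (p : ℕ) (hp_prime : p.Prime) (hp_odd : Odd p)
    (F : Type*) [Field F] [IsAlgClosed F] [CharP F 2]
    (lam : F) (hlam : IsPrimitiveRoot lam p)
    (r' s : ℕ) (m : Fin (r' + 1) → ℕ) (hm : ∀ i, 0 < m i ∧ m i ≤ (p - 1) / 2)
    (n : Fin r' → ℕ)
    (hn : ∀ i : Fin r', 1 ≤ n i ∧ n i ≤ p - 1 ∧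
      ((n i * m i.castSucc : ℕ) : ZMod p) = ((m (Fin.last r') : ℕ) : ZMod p))
    -- the action on F[V]
    (α : DihedralGroup p →*
      (MvPolynomial ((Fin (r' + 1) ⊕ Fin (r' + 1)) ⊕ (Fin s ⊕ Fin s)) F ≃ₐ[F]
       MvPolynomial ((Fin (r' + 1) ⊕ Fin (r' + 1)) ⊕ (Fin s ⊕ Fin s)) F))
    (hρx : ∀ i : Fin (r' + 1), α (DihedralGroup.r 1) (X (Sum.inl (Sum.inl i))) =
      C (lam ^ m i) * X (Sum.inl (Sum.inl i)))
    (hρy : ∀ i : Fin (r' + 1), α (DihedralGroup.r 1) (X (Sum.inl (Sum.inr i))) =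
      C (lam⁻¹ ^ m i) * X (Sum.inl (Sum.inr i)))
    (hρz : ∀ j : Fin s, α (DihedralGroup.r 1) (X (Sum.inr (Sum.inl j))) =
      X (Sum.inr (Sum.inl j)))
    (hρw : ∀ j : Fin s, α (DihedralGroup.r 1) (X (Sum.inr (Sum.inr j))) =
      X (Sum.inr (Sum.inr j)))
    (hσx : ∀ i : Fin (r' + 1), α (DihedralGroup.sr 0) (X (Sum.inl (Sum.inl i))) =
      X (Sum.inl (Sum.inr i)))
    (hσy : ∀ i : Fin (r' + 1), α (DihedralGroup.sr 0) (X (Sum.inl (Sum.inr i))) =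
      X (Sum.inl (Sum.inl i)))
    (hσz : ∀ j : Fin s, α (DihedralGroup.sr 0) (X (Sum.inr (Sum.inl j))) =
      X (Sum.inr (Sum.inr j)))
    (hσw : ∀ j : Fin s, α (DihedralGroup.sr 0) (X (Sum.inr (Sum.inr j))) =
      X (Sum.inr (Sum.inl j)))
    -- the action on F[V']
    (α' : DihedralGroup p →*
      (MvPolynomial ((Fin r' ⊕ Fin r') ⊕ (Fin s ⊕ Fin s)) F ≃ₐ[F]
       MvPolynomial ((Fin r' ⊕ Fin r') ⊕ (Fin s ⊕ Fin s)) F))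
    (hρx' : ∀ i : Fin r', α' (DihedralGroup.r 1) (X (Sum.inl (Sum.inl i))) =
      C (lam ^ m i.castSucc) * X (Sum.inl (Sum.inl i)))
    (hρy' : ∀ i : Fin r', α' (DihedralGroup.r 1) (X (Sum.inl (Sum.inr i))) =
      C (lam⁻¹ ^ m i.castSucc) * X (Sum.inl (Sum.inr i)))
    (hρz' : ∀ j : Fin s, α' (DihedralGroup.r 1) (X (Sum.inr (Sum.inl j))) =
      X (Sum.inr (Sum.inl j)))
    (hρw' : ∀ j : Fin s, α' (DihedralGroup.r 1) (X (Sum.inr (Sum.inr j))) =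
      X (Sum.inr (Sum.inr j)))
    (hσx' : ∀ i : Fin r', α' (DihedralGroup.sr 0) (X (Sum.inl (Sum.inl i))) =
      X (Sum.inl (Sum.inr i)))
    (hσy' : ∀ i : Fin r', α' (DihedralGroup.sr 0) (X (Sum.inl (Sum.inr i))) =
      X (Sum.inl (Sum.inl i)))
    (hσz' : ∀ j : Fin s, α' (DihedralGroup.sr 0) (X (Sum.inr (Sum.inl j))) =
      X (Sum.inr (Sum.inr j)))
    (hσw' : ∀ j : Fin s, α' (DihedralGroup.sr 0) (X (Sum.inr (Sum.inr j))) =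
      X (Sum.inr (Sum.inl j)))
    -- S is a set of invariants of F[V'] which is separating for V'
    (S : Set (MvPolynomial ((Fin r' ⊕ Fin r') ⊕ (Fin s ⊕ Fin s)) F))
    (hS_inv : ∀ f ∈ S, ∀ g : DihedralGroup p, α' g f = f)
    (hS_sep : ∀ u' v' : ((Fin r' ⊕ Fin r') ⊕ (Fin s ⊕ Fin s)) → F,
      (∀ f ∈ S, eval u' f = eval v' f) →
      ∀ f : MvPolynomial ((Fin r' ⊕ Fin r') ⊕ (Fin s ⊕ Fin s)) F,
        (∀ g : DihedralGroup p, α' g f = f) → eval u' f = eval v' f) :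
    -- then S ∪ T is separating for V
    ∀ u v : ((Fin (r' + 1) ⊕ Fin (r' + 1)) ⊕ (Fin s ⊕ Fin s)) → F,
      (∀ f ∈ S,
        eval u (rename (Sum.map (Sum.map Fin.castSucc Fin.castSucc) id) f) =
        eval v (rename (Sum.map (Sum.map Fin.castSucc Fin.castSucc) id) f)) →
      (eval u (X (Sum.inl (Sum.inl (Fin.last r'))) * X (Sum.inl (Sum.inr (Fin.last r')))
          : MvPolynomial ((Fin (r' + 1) ⊕ Fin (r' + 1)) ⊕ (Fin s ⊕ Fin s)) F) =
       eval v (X (Sum.inl (Sum.inl (Fin.last r'))) * X (Sum.inl (Sum.inr (Fin.last r'))))) →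
      (eval u (X (Sum.inl (Sum.inl (Fin.last r'))) ^ p + X (Sum.inl (Sum.inr (Fin.last r'))) ^ p
          : MvPolynomial ((Fin (r' + 1) ⊕ Fin (r' + 1)) ⊕ (Fin s ⊕ Fin s)) F) =
       eval v (X (Sum.inl (Sum.inl (Fin.last r'))) ^ p + X (Sum.inl (Sum.inr (Fin.last r'))) ^ p)) →
      (∀ i : Fin r',
        eval u (X (Sum.inl (Sum.inl (Fin.last r'))) * X (Sum.inl (Sum.inr i.castSucc)) ^ n i +
                X (Sum.inl (Sum.inr (Fin.last r'))) * X (Sum.inl (Sum.inl i.castSucc)) ^ n i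
            : MvPolynomial ((Fin (r' + 1) ⊕ Fin (r' + 1)) ⊕ (Fin s ⊕ Fin s)) F) =
        eval v (X (Sum.inl (Sum.inl (Fin.last r'))) * X (Sum.inl (Sum.inr i.castSucc)) ^ n i +
                X (Sum.inl (Sum.inr (Fin.last r'))) * X (Sum.inl (Sum.inl i.castSucc)) ^ n i)) →
      (∀ i : Fin r',
        eval u (X (Sum.inl (Sum.inl (Fin.last r'))) * X (Sum.inl (Sum.inl i.castSucc)) ^ (p - n i) +
                X (Sum.inl (Sum.inr (Fin.last r'))) * X (Sum.inl (Sum.inr i.castSucc)) ^ (p - n i)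
            : MvPolynomial ((Fin (r' + 1) ⊕ Fin (r' + 1)) ⊕ (Fin s ⊕ Fin s)) F) =
        eval v (X (Sum.inl (Sum.inl (Fin.last r'))) * X (Sum.inl (Sum.inl i.castSucc)) ^ (p - n i) +
                X (Sum.inl (Sum.inr (Fin.last r'))) * X (Sum.inl (Sum.inr i.castSucc)) ^ (p - n i))) →
      (∀ (i : Fin r') (j : Fin s),
        eval u (X (Sum.inl (Sum.inl (Fin.last r'))) * X (Sum.inl (Sum.inr i.castSucc)) ^ n i *
                  X (Sum.inr (Sum.inl j)) +
                X (Sum.inl (Sum.inr (Fin.last r'))) * X (Sum.inl (Sum.inl i.castSucc)) ^ n i *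
                  X (Sum.inr (Sum.inr j))
            : MvPolynomial ((Fin (r' + 1) ⊕ Fin (r' + 1)) ⊕ (Fin s ⊕ Fin s)) F) =
        eval v (X (Sum.inl (Sum.inl (Fin.last r'))) * X (Sum.inl (Sum.inr i.castSucc)) ^ n i *
                  X (Sum.inr (Sum.inl j)) +
                X (Sum.inl (Sum.inr (Fin.last r'))) * X (Sum.inl (Sum.inl i.castSucc)) ^ n i *
                  X (Sum.inr (Sum.inr j)))) →
      (∀ j : Fin s,
        eval u (X (Sum.inl (Sum.inl (Fin.last r'))) ^ p * X (Sum.inr (Sum.inl j)) +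
                X (Sum.inl (Sum.inr (Fin.last r'))) ^ p * X (Sum.inr (Sum.inr j))
            : MvPolynomial ((Fin (r' + 1) ⊕ Fin (r' + 1)) ⊕ (Fin s ⊕ Fin s)) F) =
        eval v (X (Sum.inl (Sum.inl (Fin.last r'))) ^ p * X (Sum.inr (Sum.inl j)) +
                X (Sum.inl (Sum.inr (Fin.last r'))) ^ p * X (Sum.inr (Sum.inr j)))) →
      ∀ f : MvPolynomial ((Fin (r' + 1) ⊕ Fin (r' + 1)) ⊕ (Fin s ⊕ Fin s)) F,
        (∀ g : DihedralGroup p, α g f = f) → eval u f = eval v f :=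
  separating_set_extension_general p hp_prime F lam hlam r' s m hm n hn α hρx hρy hρz hρw hσx hσy
    hσz hσw α' hρx' hρy' hρz' hρw' hσx' hσy' hσz' hσw' S hS_sep
end

section
/- The regular representation F[G] of G = D_{2p} (the group algebra of G over F, with G acting by left multiplication) is isomorphic as an F-representation of G to the direct sum ⊕_{i=1}^{(p-1)/2} (W_i ⊕ W_i) ⊕ W_0. -/
/-!
For `i : ZMod p` let `Aᵢ = ∑ₘ λ^{im} ρᵐ` and `Bᵢ = ∑ₘ λ^{im} σρᵐ` in `F[G]`. Left multiplication
by `ρ` scales `Aᵢ` by `λ^{-i}` and `Bᵢ` by `λ^{i}`, and `σ` swaps the two, so `span {Aᵢ, Bᵢ}` is a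
copy of `W_i` for `1 ≤ i ≤ (p-1)/2`, of `W_0` for `i = 0`, and, after exchanging `Aᵢ` and `Bᵢ`,
of `W_{-i}` for the remaining `i`. The `2p` vectors `Aᵢ, Bᵢ` form a basis of `F[G]`: their
coordinate matrix is block diagonal with two copies of the Vandermonde matrix `(λ^{im})`, which
is invertible because `λ` is a primitive `p`-th root of unity.
-/

open Module

theorem Module.Basis.isInternal_span_image_fiber {R M ι κ : Type*} [Ring R] [AddCommGroup M]
    [Module R M] [DecidableEq κ] (b : Basis ι R M) (f : ι → κ) :
    DirectSum.IsInternal fun k => Submodule.span R (b '' (f ⁻¹' {k})) := by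
  refine DirectSum.isInternal_submodule_of_iSupIndep_of_iSup_eq_top (fun k => ?_) ?_
  · refine (b.linearIndependent.disjoint_span_image (s := f ⁻¹' {k}) (t := f ⁻¹' {k}ᶜ)
      ((disjoint_compl_right (a := ({k} : Set κ))).preimage f)).mono_right ?_
    refine iSup₂_le fun j hj => Submodule.span_mono (Set.image_mono ?_)
    exact Set.preimage_mono (by simpa [eq_comm] using hj)
  · rw [← Submodule.span_iUnion, ← Set.image_iUnion, ← Set.preimage_iUnion,
      Set.iUnion_singleton_eq_range, Set.range_id', Set.preimage_univ, Set.image_univ, b.span_eq]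

theorem Module.Basis.isInternal_span_pair {R M ι : Type*} [Ring R] [AddCommGroup M] [Module R M]
    [DecidableEq ι] (b : Basis (ι ⊕ ι) R M) :
    DirectSum.IsInternal fun k => Submodule.span R {b (.inl k), b (.inr k)} := by
  convert b.isInternal_span_image_fiber (Sum.elim id id) with k
  have hfiber : Sum.elim id id ⁻¹' {k} = {.inl k, .inr k} := by
    ext (x | x) <;> simp [eq_comm]
  rw [hfiber, Set.image_pair]

theorem Module.Basis.linearIndependent_pair {R M ι : Type*} [Semiring R] [AddCommMonoid M]
    [Module R M] (b : Basis ι R M) {i j : ι} (h : i ≠ j) : LinearIndependent R ![b i, b j] := by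
  convert b.linearIndependent.comp ![i, j] ?_
  · ext k
    fin_cases k <;> rfl
  · intro x y
    fin_cases x <;> fin_cases y <;> simp [h, h.symm]

theorem Module.Basis.isUnit_det_sum_smul {R M ι : Type*} [CommRing R] [AddCommGroup M]
    [Module R M] [Fintype ι] [DecidableEq ι] (e : Basis ι R M) (V : Matrix ι ι R)
    (hV : IsUnit V.det) :
    LinearIndependent R (fun i => ∑ j, V i j • e j) ∧
      Submodule.span R (Set.range fun i => ∑ j, V i j • e j) = ⊤ := by
  rw [e.is_basis_iff_det, e.det_apply, ← Matrix.det_transpose]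
  convert hV using 2
  ext i j
  simp [Basis.toMatrix_apply, Finsupp.single_apply]

theorem IsPrimitiveRoot.pow_eq_pow_of_natCast_eq {M : Type*} [CommMonoid M] {ζ : M} {p : ℕ}
    [NeZero p] (h : IsPrimitiveRoot ζ p) {a b : ℕ} (hab : (a : ZMod p) = b) : ζ ^ a = ζ ^ b := by
  rw [(h.isOfFinOrder (NeZero.ne p)).pow_eq_pow_iff_modEq, ← h.eq_orderOf]
  exact (ZMod.natCast_eq_natCast_iff _ _ _).1 hab

theorem IsPrimitiveRoot.pow_val_natCast {M : Type*} [CommMonoid M] {ζ : M} {p : ℕ} [NeZero p]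
    (h : IsPrimitiveRoot ζ p) (n : ℕ) : ζ ^ (n : ZMod p).val = ζ ^ n :=
  h.pow_eq_pow_of_natCast_eq (ZMod.natCast_zmod_val _)

theorem IsPrimitiveRoot.pow_val_neg_natCast {F : Type*} [Field F] {ζ : F} {p : ℕ} [NeZero p]
    (h : IsPrimitiveRoot ζ p) (n : ℕ) : ζ ^ (-(n : ZMod p)).val = ζ⁻¹ ^ n := by
  rw [inv_pow]
  refine eq_inv_of_mul_eq_one_left ?_
  rw [← pow_add, ← pow_zero ζ]
  exact h.pow_eq_pow_of_natCast_eq (by simp)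

theorem IsPrimitiveRoot.det_vandermonde_zmod_ne_zero {F : Type*} [Field F] {ζ : F} {p : ℕ}
    [NeZero p] (h : IsPrimitiveRoot ζ p) :
    (Matrix.of fun i m : ZMod p => ζ ^ (i.val * m.val)).det ≠ 0 := by
  have hval (i : Fin p) : (ZMod.finEquiv p i).val = i := by
    obtain ⟨n, rfl⟩ := Nat.exists_eq_succ_of_ne_zero (NeZero.ne p)
    rfl
  rw [← Matrix.det_reindex_self (ZMod.finEquiv p).symm.toEquiv]
  convert (Matrix.det_vandermonde_ne_zero_iff (v := fun i : Fin p => ζ ^ (i : ℕ))).2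
    fun i j hij => Fin.ext (h.pow_inj i.isLt j.isLt hij) using 2
  ext i m
  simp [Matrix.vandermonde, pow_mul, hval]

namespace DihedralGroup

theorem apply_mem_of_r_one_sr_zero {R V : Type*} {n : ℕ} [NeZero n] [CommSemiring R]
    [AddCommMonoid V] [Module R V] (θ : Representation R (DihedralGroup n) V) {W : Submodule R V}
    (hr : ∀ v ∈ W, θ (r 1) v ∈ W) (hs : ∀ v ∈ W, θ (sr 0) v ∈ W) (g : DihedralGroup n) {v : V}
    (hv : v ∈ W) : θ g v ∈ W := by
  have hrot (a : ZMod n) : θ (r a) v ∈ W := by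
    rw [← ZMod.natCast_zmod_val a, ← r_one_pow, map_pow, Module.End.pow_apply]
    exact Set.MapsTo.iterate (f := θ (r 1)) hr _ hv
  rcases g with a | a
  · exact hrot a
  · rw [← zero_add a, ← sr_mul_r, map_mul, Module.End.mul_apply]
    exact hs _ (hrot a)

theorem apply_mem_span_pair {R V : Type*} {n : ℕ} [NeZero n] [CommSemiring R] [AddCommMonoid V]
    [Module R V] (θ : Representation R (DihedralGroup n) V) {v w : V} {c d : R}
    (hv : θ (r 1) v = c • v) (hw : θ (r 1) w = d • w) (hsv : θ (sr 0) v = w)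
    (hsw : θ (sr 0) w = v) (g : DihedralGroup n) {x : V} (hx : x ∈ Submodule.span R {v, w}) :
    θ g x ∈ Submodule.span R {v, w} := by
  have hv_mem : v ∈ Submodule.span R {v, w} := Submodule.subset_span (by simp)
  have hw_mem : w ∈ Submodule.span R {v, w} := Submodule.subset_span (by simp)
  have stable (h : DihedralGroup n) (h₁ : θ h v ∈ Submodule.span R {v, w})
      (h₂ : θ h w ∈ Submodule.span R {v, w}) :
      ∀ y ∈ Submodule.span R {v, w}, θ h y ∈ Submodule.span R {v, w} := fun y hy =>
    (Submodule.span_le (p := (Submodule.span R {v, w}).comap (θ h)).2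
      (Set.insert_subset_iff.2 ⟨h₁, Set.singleton_subset_iff.2 h₂⟩)) hy
  refine apply_mem_of_r_one_sr_zero θ (stable _ ?_ ?_) (stable _ ?_ ?_) g hx
  · rw [hv]
    exact Submodule.smul_mem _ _ hv_mem
  · rw [hw]
    exact Submodule.smul_mem _ _ hw_mem
  · rwa [hsv]
  · rwa [hsw]

section Blocks

variable {p : ℕ}

def blockIndex (p : ℕ) : Fin ((p - 1) / 2) ⊕ Fin ((p - 1) / 2) ⊕ Unit → ZMod p :=
  Sum.elim (fun j => ((j + 1 : ℕ) : ZMod p))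
    (Sum.elim (fun j => -((j + 1 : ℕ) : ZMod p)) fun _ => 0)

def blockExponent (p : ℕ) : Fin ((p - 1) / 2) ⊕ Fin ((p - 1) / 2) ⊕ Unit → ℕ :=
  Sum.elim (fun j => (j : ℕ) + 1) (Sum.elim (fun j => (j : ℕ) + 1) fun _ => 0)

theorem blockIndex_eq (k : Fin ((p - 1) / 2) ⊕ Fin ((p - 1) / 2) ⊕ Unit) :
    blockIndex p k = blockExponent p k ∨ blockIndex p k = -blockExponent p k := by
  rcases k with j | j | _ <;> simp [blockIndex, blockExponent]

theorem val_blockIndex (hp : Odd p) (k : Fin ((p - 1) / 2) ⊕ Fin ((p - 1) / 2) ⊕ Unit) :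
    (blockIndex p k).val =
      Sum.elim (fun j : Fin ((p - 1) / 2) => (j : ℕ) + 1)
        (Sum.elim (fun j : Fin ((p - 1) / 2) => p - ((j : ℕ) + 1)) fun _ => 0) k := by
  have : NeZero p := ⟨hp.pos.ne'⟩
  have hp2 := Nat.odd_iff.1 hp
  rcases k with j | j | _
  · exact ZMod.val_cast_of_lt (by omega)
  · have hj : (j : ℕ) + 1 < p := by omega
    have hne : ((j + 1 : ℕ) : ZMod p) ≠ 0 := by
      rw [Ne, ← ZMod.val_eq_zero, ZMod.val_cast_of_lt hj]
      omega
    simp only [blockIndex, Sum.elim_inl, Sum.elim_inr]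
    rw [ZMod.neg_val, if_neg hne, ZMod.val_cast_of_lt hj]
  · simp [blockIndex]

theorem blockIndex_bijective (hp : Odd p) : Function.Bijective (blockIndex p) := by
  have : NeZero p := ⟨hp.pos.ne'⟩
  have hp2 := Nat.odd_iff.1 hp
  refine (Fintype.bijective_iff_injective_and_card _).2 ⟨?_, ?_⟩
  · refine Function.Injective.of_comp (f := ZMod.val) fun a b h => ?_
    simp only [Function.comp_apply, val_blockIndex hp] at h
    rcases a with a | a | _ <;> rcases b with b | b | _ <;>
      simp only [Sum.elim_inl, Sum.elim_inr, Sum.inl.injEq, Sum.inr.injEq, reduceCtorEq,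
        Fin.ext_iff] at h ⊢ <;> omega
  · simp only [Fintype.card_sum, Fintype.card_fin, Fintype.card_unique, ZMod.card]
    omega

end Blocks

section Fourier

open Finsupp

variable {F : Type*} [Field F] {p : ℕ} [NeZero p]

def dftMatrix (lam : F) : Matrix (ZMod p) (ZMod p) F :=
  Matrix.of fun i m => lam ^ (i.val * m.val)

noncomputable def rotationFourier (lam : F) (i : ZMod p) : DihedralGroup p →₀ F :=
  ∑ m, dftMatrix lam i m • single (r m) 1

noncomputable def reflectionFourier (lam : F) (i : ZMod p) : DihedralGroup p →₀ F :=
  ∑ m, dftMatrix lam i m • single (sr m) 1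

theorem fourier_eq_sum_fromBlocks_smul (lam : F) :
    Sum.elim (rotationFourier (p := p) lam) (reflectionFourier lam) = fun x =>
      ∑ y, Matrix.fromBlocks (dftMatrix lam) 0 0 (dftMatrix lam) x y •
        (Finsupp.basisSingleOne.reindex equivSum) y := by
  ext (i | i) : 1 <;>
    simp [rotationFourier, reflectionFourier, Fintype.sum_sum_type, Basis.reindex_apply]

noncomputable def fourierBasis {lam : F} (hlam : IsPrimitiveRoot lam p) :
    Basis (ZMod p ⊕ ZMod p) F (DihedralGroup p →₀ F) :=
  have hV : IsUnit (Matrix.fromBlocks (dftMatrix (p := p) lam) 0 0 (dftMatrix lam)).det := by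
    rw [Matrix.det_fromBlocks_zero₂₁, isUnit_iff_ne_zero]
    exact mul_ne_zero hlam.det_vandermonde_zmod_ne_zero hlam.det_vandermonde_zmod_ne_zero
  have h := (Finsupp.basisSingleOne.reindex equivSum).isUnit_det_sum_smul _ hV
  Basis.mk (v := Sum.elim (rotationFourier lam) (reflectionFourier lam))
    (by rw [fourier_eq_sum_fromBlocks_smul]; exact h.1)
    (by rw [fourier_eq_sum_fromBlocks_smul]; exact h.2.ge)

theorem coe_fourierBasis {lam : F} (hlam : IsPrimitiveRoot lam p) :
    ⇑(fourierBasis hlam) = Sum.elim (rotationFourier lam) (reflectionFourier lam) := by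
  simp [fourierBasis]

theorem sum_dftMatrix_smul_add {M : Type*} [AddCommMonoid M] [Module F M] {lam : F}
    (hlam : IsPrimitiveRoot lam p) (f : ZMod p → M) (i c : ZMod p) :
    ∑ m, dftMatrix lam i m • f (m + c) = lam ^ (-(i * c)).val • ∑ m, dftMatrix lam i m • f m := by
  rw [Finset.smul_sum]
  refine Fintype.sum_equiv (Equiv.addRight c) _ _ fun m => ?_
  rw [smul_smul, Equiv.coe_addRight]
  congr 1
  simp only [dftMatrix, Matrix.of_apply, ← pow_add]
  apply hlam.pow_eq_pow_of_natCast_eq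
  push_cast [ZMod.natCast_val, ZMod.cast_id]
  ring

variable {θ : Representation F (DihedralGroup p) (DihedralGroup p →₀ F)} {lam : F} (i : ZMod p)

theorem r_one_rotationFourier (hθ : ∀ g h c, θ g (single h c) = single (g * h) c)
    (hlam : IsPrimitiveRoot lam p) :
    θ (r 1) (rotationFourier lam i) = lam ^ (-i).val • rotationFourier lam i := by
  have h := sum_dftMatrix_smul_add hlam (fun m => single (r m) (1 : F)) i 1
  rw [mul_one] at h
  simpa [rotationFourier, hθ, r_mul_r, add_comm] using h

theorem r_one_reflectionFourier (hθ : ∀ g h c, θ g (single h c) = single (g * h) c)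
    (hlam : IsPrimitiveRoot lam p) :
    θ (r 1) (reflectionFourier lam i) = lam ^ i.val • reflectionFourier lam i := by
  have h := sum_dftMatrix_smul_add hlam (fun m => single (sr m) (1 : F)) i (-1)
  rw [mul_neg_one, neg_neg] at h
  simpa [reflectionFourier, hθ, r_mul_sr, sub_eq_add_neg] using h

theorem sr_zero_rotationFourier (hθ : ∀ g h c, θ g (single h c) = single (g * h) c) :
    θ (sr 0) (rotationFourier lam i) = reflectionFourier lam i := by
  simp [rotationFourier, reflectionFourier, hθ, sr_mul_r]

theorem sr_zero_reflectionFourier (hθ : ∀ g h c, θ g (single h c) = single (g * h) c) :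
    θ (sr 0) (reflectionFourier lam i) = rotationFourier lam i := by
  simp [rotationFourier, reflectionFourier, hθ, sr_mul_sr]

theorem exists_wBasis_span_fourier (hθ : ∀ g h c, θ g (single h c) = single (g * h) c)
    (hlam : IsPrimitiveRoot lam p) (n : ℕ) (hn : i = n ∨ i = -n) :
    ∃ v₁ v₂ : DihedralGroup p →₀ F,
      v₁ ∈ Submodule.span F {rotationFourier lam i, reflectionFourier lam i} ∧
      v₂ ∈ Submodule.span F {rotationFourier lam i, reflectionFourier lam i} ∧
      Submodule.span F {rotationFourier lam i, reflectionFourier lam i} =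
        Submodule.span F {v₁, v₂} ∧
      LinearIndependent F ![v₁, v₂] ∧
      θ (r 1) v₁ = lam⁻¹ ^ n • v₁ ∧ θ (r 1) v₂ = lam ^ n • v₂ ∧
      θ (sr 0) v₁ = v₂ ∧ θ (sr 0) v₂ = v₁ := by
  have hli := (fourierBasis hlam).linearIndependent_pair (Sum.inl_ne_inr (a := i) (b := i))
  have hli' := (fourierBasis hlam).linearIndependent_pair (Sum.inr_ne_inl (a := i) (b := i))
  simp only [coe_fourierBasis, Sum.elim_inl, Sum.elim_inr] at hli hli'
  have mem_rot : rotationFourier lam i ∈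
      Submodule.span F {rotationFourier lam i, reflectionFourier lam i} :=
    Submodule.subset_span (by simp)
  have mem_refl : reflectionFourier lam i ∈
      Submodule.span F {rotationFourier lam i, reflectionFourier lam i} :=
    Submodule.subset_span (by simp)
  rcases hn with rfl | rfl
  · refine ⟨_, _, mem_rot, mem_refl, rfl, hli, ?_, ?_, sr_zero_rotationFourier _ hθ,
      sr_zero_reflectionFourier _ hθ⟩
    · rw [r_one_rotationFourier _ hθ hlam, hlam.pow_val_neg_natCast]
    · rw [r_one_reflectionFourier _ hθ hlam, hlam.pow_val_natCast]
  · refine ⟨_, _, mem_refl, mem_rot, by rw [Set.pair_comm], hli', ?_, ?_,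
      sr_zero_reflectionFourier _ hθ, sr_zero_rotationFourier _ hθ⟩
    · rw [r_one_reflectionFourier _ hθ hlam, hlam.pow_val_neg_natCast]
    · rw [r_one_rotationFourier _ hθ hlam, neg_neg, hlam.pow_val_natCast]

end Fourier

end DihedralGroup

open DihedralGroup in
theorem regular_representation_decomposition_general
    (p : ℕ) (hp_odd : Odd p)
    (F : Type*) [Field F]
    (lam : F) (hlam : IsPrimitiveRoot lam p)
    (θ : Representation F (DihedralGroup p) (DihedralGroup p →₀ F))
    (hθ : ∀ g : DihedralGroup p, θ g =
      (MonoidAlgebra.coeffLinearEquiv (S := F) (M := DihedralGroup p) F).toLinearMap ∘ₗ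
        Representation.ofMulAction F (DihedralGroup p) (DihedralGroup p) g ∘ₗ
        (MonoidAlgebra.coeffLinearEquiv (S := F) (M := DihedralGroup p) F).symm.toLinearMap) :
    ∃ W : (Fin ((p - 1) / 2) ⊕ Fin ((p - 1) / 2) ⊕ Unit) →
        Submodule F (DihedralGroup p →₀ F),
      DirectSum.IsInternal W ∧
      (∀ (k : Fin ((p - 1) / 2) ⊕ Fin ((p - 1) / 2) ⊕ Unit) (g : DihedralGroup p)
          (v : DihedralGroup p →₀ F), v ∈ W k → θ g v ∈ W k) ∧
      (∀ k : Fin ((p - 1) / 2) ⊕ Fin ((p - 1) / 2) ⊕ Unit,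
        ∃ v1 v2 : DihedralGroup p →₀ F,
          v1 ∈ W k ∧ v2 ∈ W k ∧
          W k = Submodule.span F {v1, v2} ∧
          LinearIndependent F ![v1, v2] ∧
          θ (DihedralGroup.r 1) v1 =
            lam⁻¹ ^ (Sum.elim (fun j : Fin ((p - 1) / 2) => (j : ℕ) + 1)
              (Sum.elim (fun j : Fin ((p - 1) / 2) => (j : ℕ) + 1) (fun _ => 0)) k) • v1 ∧
          θ (DihedralGroup.r 1) v2 =
            lam ^ (Sum.elim (fun j : Fin ((p - 1) / 2) => (j : ℕ) + 1)
              (Sum.elim (fun j : Fin ((p - 1) / 2) => (j : ℕ) + 1) (fun _ => 0)) k) • v2 ∧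
          θ (DihedralGroup.sr 0) v1 = v2 ∧
          θ (DihedralGroup.sr 0) v2 = v1) := by
  have : NeZero p := ⟨hp_odd.pos.ne'⟩
  have hθ_single (g h : DihedralGroup p) (c : F) :
      θ g (Finsupp.single h c) = Finsupp.single (g * h) c := by
    simp [hθ, Representation.ofMulAction_def]
  let e := Equiv.ofBijective _ (blockIndex_bijective hp_odd)
  refine ⟨fun k => Submodule.span F
      {rotationFourier lam (blockIndex p k), reflectionFourier lam (blockIndex p k)}, ?_,
    fun k g v hv => apply_mem_span_pair θ (r_one_rotationFourier _ hθ_single hlam)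
      (r_one_reflectionFourier _ hθ_single hlam) (sr_zero_rotationFourier _ hθ_single)
      (sr_zero_reflectionFourier _ hθ_single) g hv,
    fun k => exists_wBasis_span_fourier _ hθ_single hlam (blockExponent p k) (blockIndex_eq k)⟩
  have h := ((fourierBasis hlam).reindex (Equiv.sumCongr e.symm e.symm)).isInternal_span_pair
  simp only [Basis.coe_reindex, DihedralGroup.coe_fourierBasis, Equiv.sumCongr_symm,
    Equiv.symm_symm, Function.comp_apply, Equiv.sumCongr_apply, Equiv.coe_ofBijective, Sum.map_inl,
    Sum.elim_inl, Sum.map_inr, Sum.elim_inr, e] at h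
  exact h

/-- The regular representation `F[G]` of `G = D_{2p}` (`p ≥ 3` odd, `F`
algebraically closed of characteristic two), i.e. the group algebra
`DihedralGroup p →₀ F` with `G` acting by left multiplication, is isomorphic
as an `F`-representation of `G` to `⊕_{i=1}^{(p-1)/2} (W_i ⊕ W_i) ⊕ W_0`:
it decomposes as an internal direct sum of `G`-stable submodules indexed by
`Fin ((p-1)/2) ⊕ Fin ((p-1)/2) ⊕ Unit`, where the `k`-th summand has a basis
`v1, v2` realizing `W_{i}` (with `i = k+1` for the first two blocks, `i = 0`
for the last one): `ρ v1 = λ⁻ⁱ v1`, `ρ v2 = λⁱ v2`, `σ v1 = v2`, `σ v2 = v1`. -/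
theorem regular_representation_decomposition
    (p : ℕ) (hp_odd : Odd p) (hp : 3 ≤ p)
    (F : Type*) [Field F] [IsAlgClosed F] [CharP F 2]
    (lam : F) (hlam : IsPrimitiveRoot lam p)
    (θ : Representation F (DihedralGroup p) (DihedralGroup p →₀ F))
    (hθ : ∀ g : DihedralGroup p, θ g =
      (MonoidAlgebra.coeffLinearEquiv (S := F) (M := DihedralGroup p) F).toLinearMap ∘ₗ
        Representation.ofMulAction F (DihedralGroup p) (DihedralGroup p) g ∘ₗ
        (MonoidAlgebra.coeffLinearEquiv (S := F) (M := DihedralGroup p) F).symm.toLinearMap) :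
    ∃ W : (Fin ((p - 1) / 2) ⊕ Fin ((p - 1) / 2) ⊕ Unit) →
        Submodule F (DihedralGroup p →₀ F),
      DirectSum.IsInternal W ∧
      (∀ (k : Fin ((p - 1) / 2) ⊕ Fin ((p - 1) / 2) ⊕ Unit) (g : DihedralGroup p)
          (v : DihedralGroup p →₀ F), v ∈ W k → θ g v ∈ W k) ∧
      (∀ k : Fin ((p - 1) / 2) ⊕ Fin ((p - 1) / 2) ⊕ Unit,
        ∃ v1 v2 : DihedralGroup p →₀ F,
          v1 ∈ W k ∧ v2 ∈ W k ∧
          W k = Submodule.span F {v1, v2} ∧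
          LinearIndependent F ![v1, v2] ∧
          θ (DihedralGroup.r 1) v1 =
            lam⁻¹ ^ (Sum.elim (fun j : Fin ((p - 1) / 2) => (j : ℕ) + 1)
              (Sum.elim (fun j : Fin ((p - 1) / 2) => (j : ℕ) + 1) (fun _ => 0)) k) • v1 ∧
          θ (DihedralGroup.r 1) v2 =
            lam ^ (Sum.elim (fun j : Fin ((p - 1) / 2) => (j : ℕ) + 1)
              (Sum.elim (fun j : Fin ((p - 1) / 2) => (j : ℕ) + 1) (fun _ => 0)) k) • v2 ∧
          θ (DihedralGroup.sr 0) v1 = v2 ∧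
          θ (DihedralGroup.sr 0) v2 = v1) :=
  regular_representation_decomposition_general p hp_odd F lam hlam θ hθ
end
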